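/- arXiv:2504.17831 — 5 statements merged into one kernel-verified Lean document; each statement's English description precedes it below -/
import Mathlib

section
/- Let (X,G) be a graph with uniformly bounded degrees and 𝒞 a cutset of G with uniformly bounded boundaries that is closed under complementation. Then there exist finitely many cutsets 𝒞₀, …, 𝒞ₙ with 𝒞 = 𝒞₀ ∪ ⋯ ∪ 𝒞ₙ such that each 𝒞ᵢ is nested, closed under complementation, has uniformly bounded boundaries, and is finitely separating on each E_G-class (i.e., for every E_G-class ω, {C ∈ 𝒞ᵢ : C ⊆ ω} is a treeset on ω). -/
open Set

/-- A *walk* of length `n` in the (directed presentation of the) edge set `E`. -/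
def IsWalk {α : Type*} (E : Set (α × α)) (f : ℕ → α) (n : ℕ) : Prop :=
  ∀ i < n, (f i, f (i + 1)) ∈ E

/-- Two points are joined by an `E`-path. -/
def Reach {α : Type*} (E : Set (α × α)) (x y : α) : Prop :=
  ∃ (n : ℕ) (f : ℕ → α), f 0 = x ∧ f n = y ∧ IsWalk E f n

/-- The extended path metric `d_E` of a graph, with values in `ℕ∞` (`∞` if no path exists). -/
noncomputable def graphDist {α : Type*} (E : Set (α × α)) (x y : α) : ℕ∞ :=
  sInf {d : ℕ∞ | ∃ (n : ℕ) (f : ℕ → α), d = (n : ℕ∞) ∧ f 0 = x ∧ f n = y ∧ IsWalk E f n}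

/-- A graph is *acyclic* if it has no injective cycle (of length at least 3,
i.e. not doubling back along a single edge). -/
def Acyclic {α : Type*} (E : Set (α × α)) : Prop :=
  ¬ ∃ (f : ℕ → α) (n : ℕ), 3 ≤ n ∧ IsWalk E f n ∧ f n = f 0 ∧
      ∀ i j, i < n → j < n → f i = f j → i = j

/-- `E` is (the directed presentation of) a graph: symmetric and irreflexive. -/
def IsGraph {α : Type*} (E : Set (α × α)) : Prop :=
  (∀ p ∈ E, (p.2, p.1) ∈ E) ∧ ∀ x : α, (x, x) ∉ E

/-- `(α, E)` has uniformly bounded degrees. -/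
def BddDeg {α : Type*} (E : Set (α × α)) : Prop :=
  ∃ d : ℕ, ∀ x : α, {y | (x, y) ∈ E}.encard ≤ (d : ℕ∞)

/-- The `E_G`-class (connected component) of `x`. -/
def cls {α : Type*} (E : Set (α × α)) (x : α) : Set α := {y | Reach E x y}

/-- The complement `C̄ = ω ∖ C` of `C` inside the `E_G`-class(es) of its points. -/
def cCompl {α : Type*} (E : Set (α × α)) (C : Set α) : Set α :=
  {y | y ∉ C ∧ ∃ x ∈ C, Reach E x y}

/-- Inner vertex boundary `∂iv C` of a subset `C` of an `E_G`-class. -/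
def innerB {α : Type*} (E : Set (α × α)) (C : Set α) : Set α :=
  {x | x ∈ C ∧ ∃ y, y ∉ C ∧ (x, y) ∈ E}

/-- Outer vertex boundary `∂ov C = ∂iv C̄` of a subset `C` of an `E_G`-class. -/
def outerB {α : Type*} (E : Set (α × α)) (C : Set α) : Set α :=
  {y | y ∉ C ∧ ∃ x ∈ C, (y, x) ∈ E}

/-- Outer edge boundary `∂oe C = (C × C̄) ∩ E` of a subset `C` of an `E_G`-class. -/
def outerEdgeB {α : Type*} (E : Set (α × α)) (C : Set α) : Set (α × α) :=
  {p | p ∈ E ∧ p.1 ∈ C ∧ p.2 ∉ C}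

/-- A *cut* of a graph: a nonempty proper subset of an `E_G`-class with finite
edge boundary. -/
def IsCut {α : Type*} (E : Set (α × α)) (C : Set α) : Prop :=
  (∃ x₀, x₀ ∈ C ∧ C ⊆ cls E x₀ ∧ C ≠ cls E x₀) ∧ (outerEdgeB E C).Finite

/-- `diam_E(A)`, with values in `ℕ∞`. -/
noncomputable def gdiam {α : Type*} (E : Set (α × α)) (A : Set α) : ℕ∞ :=
  ⨆ x ∈ A, ⨆ y ∈ A, graphDist E x y

/-- `C` and `D` lie on the same `E_G`-class. -/
def SameClass {α : Type*} (E : Set (α × α)) (C D : Set α) : Prop :=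
  ∃ x ∈ C, ∃ y ∈ D, Reach E x y

/-- `C` and `D` are *nested* with each other (complements taken within the class). -/
def NestedPair {α : Type*} (E : Set (α × α)) (C D : Set α) : Prop :=
  C ∩ D = ∅ ∨ C ∩ cCompl E D = ∅ ∨ cCompl E C ∩ D = ∅ ∨ cCompl E C ∩ cCompl E D = ∅
/-- A *treeset on a set* `ω`: a family of nonempty proper subsets of `ω` that is nested,
closed under complementation within `ω`, and finitely separating. -/
def IsTreesetOn {α : Type*} (ω : Set α) (𝒟 : Set (Set α)) : Prop :=
  (∀ C ∈ 𝒟, C ⊆ ω ∧ C.Nonempty ∧ C ≠ ω) ∧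
  (∀ C ∈ 𝒟, ∀ D ∈ 𝒟,
      C ∩ D = ∅ ∨ C ∩ (ω \ D) = ∅ ∨ (ω \ C) ∩ D = ∅ ∨ (ω \ C) ∩ (ω \ D) = ∅) ∧
  (∀ C ∈ 𝒟, ω \ C ∈ 𝒟) ∧
  (∀ x ∈ ω, ∀ y ∈ ω, {C | C ∈ 𝒟 ∧ x ∈ C ∧ y ∉ C}.Finite)

/-!
If two cuts of `𝒞` on the same class cross, their inner boundaries are within distance `r + 3`:
otherwise the vertex boundary of each lies on one side of the other, and the corner opposite to
both boundaries is closed under edges, hence empty. A cut is determined by its trace on a ball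
containing its vertex boundary, so bounded degree bounds the number of cuts whose boundary lies
in a ball of given radius; thus each cut of `𝒞` crosses at most `N` others. Colour the crossing
graph greedily with `N + 1` colours and let the `i`-th class consist of the cuts `C` such that `C`
or its complement has colour `i`. Crossing is unchanged by complementing either cut, so no two
cuts of a class cross, and each class is closed under complementation. Finite separation already
holds in `𝒞`: a cut separating `x` from `y` has its boundary near a path from `x` to `y`.
-/

section

variable {X : Type*} {G : Set (X × X)}

def graphBall (G : Set (X × X)) (x : X) (m : ℕ) : Set X :=
  {y | ∃ k ≤ m, ∃ f : ℕ → X, f 0 = x ∧ f k = y ∧ IsWalk G f k}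

theorem self_mem_graphBall (x : X) (m : ℕ) : x ∈ graphBall G x m :=
  ⟨0, Nat.zero_le m, fun _ => x, rfl, rfl, fun _ h => absurd h (Nat.not_lt_zero _)⟩

theorem graphBall_mono {x : X} {m m' : ℕ} (h : m ≤ m') : graphBall G x m ⊆ graphBall G x m' :=
  fun _ ⟨k, hk, hf⟩ => ⟨k, hk.trans h, hf⟩

theorem mem_graphBall_zero {x y : X} : y ∈ graphBall G x 0 ↔ y = x := by
  constructor
  · rintro ⟨k, hk, f, rfl, rfl, -⟩
    rw [Nat.le_zero.mp hk]
  · rintro rfl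
    exact self_mem_graphBall y 0

theorem mem_graphBall_succ {x z : X} {m : ℕ} :
    z ∈ graphBall G x (m + 1) ↔ z ∈ graphBall G x m ∨ ∃ y ∈ graphBall G x m, (y, z) ∈ G := by
  constructor
  · rintro ⟨k, hk, f, rfl, rfl, hf⟩
    rcases Nat.lt_or_ge k (m + 1) with hk' | hk'
    · exact Or.inl ⟨k, by omega, f, rfl, rfl, hf⟩
    · obtain rfl : k = m + 1 := by omega
      exact Or.inr ⟨f m, ⟨m, le_rfl, f, rfl, rfl, fun i hi => hf i (by omega)⟩, hf m (by omega)⟩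
  · rintro (hz | ⟨y, ⟨k, hk, f, rfl, rfl, hf⟩, hyz⟩)
    · exact graphBall_mono (Nat.le_succ m) hz
    · refine ⟨k + 1, by omega, fun i => if i ≤ k then f i else z, by simp, by simp, ?_⟩
      intro i hi
      rcases Nat.lt_or_ge i k with hik | hik
      · simpa [hik.le, Nat.succ_le_of_lt hik] using hf i hik
      · obtain rfl : i = k := by omega
        simpa using hyz

theorem mem_graphBall_one_of_adj {x y : X} (h : (x, y) ∈ G) : y ∈ graphBall G x 1 :=
  mem_graphBall_succ.mpr (Or.inr ⟨x, self_mem_graphBall x 0, h⟩)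

theorem mem_graphBall_trans {x y z : X} {m n : ℕ} (hy : y ∈ graphBall G x m)
    (hz : z ∈ graphBall G y n) : z ∈ graphBall G x (m + n) := by
  induction n generalizing z with
  | zero => rwa [mem_graphBall_zero.mp hz]
  | succ n ih =>
    rcases mem_graphBall_succ.mp hz with hz | ⟨w, hw, hwz⟩
    · exact graphBall_mono (by omega) (ih hz)
    · exact mem_graphBall_succ.mpr (Or.inr ⟨w, ih hw, hwz⟩)

theorem mem_graphBall_comm (hsymm : ∀ p ∈ G, (p.2, p.1) ∈ G) {x y : X} {m : ℕ}
    (h : y ∈ graphBall G x m) : x ∈ graphBall G y m := by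
  induction m generalizing y with
  | zero =>
    rw [mem_graphBall_zero.mp h]
    exact self_mem_graphBall x 0
  | succ m ih =>
    rcases mem_graphBall_succ.mp h with h | ⟨w, hw, hwy⟩
    · exact graphBall_mono (Nat.le_succ m) (ih h)
    · rw [add_comm]
      exact mem_graphBall_trans (mem_graphBall_one_of_adj (hsymm _ hwy)) (ih hw)

theorem reach_iff_exists_mem_graphBall {x y : X} : Reach G x y ↔ ∃ m, y ∈ graphBall G x m :=
  ⟨fun ⟨n, hn⟩ => ⟨n, n, le_rfl, hn⟩, fun ⟨_, k, _, hk⟩ => ⟨k, hk⟩⟩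

theorem Reach.trans {x y z : X} (hxy : Reach G x y) (hyz : Reach G y z) : Reach G x z := by
  obtain ⟨m, hm⟩ := reach_iff_exists_mem_graphBall.mp hxy
  obtain ⟨n, hn⟩ := reach_iff_exists_mem_graphBall.mp hyz
  exact reach_iff_exists_mem_graphBall.mpr ⟨m + n, mem_graphBall_trans hm hn⟩

theorem Reach.symm (hsymm : ∀ p ∈ G, (p.2, p.1) ∈ G) {x y : X} (h : Reach G x y) :
    Reach G y x := by
  obtain ⟨m, hm⟩ := reach_iff_exists_mem_graphBall.mp h
  exact reach_iff_exists_mem_graphBall.mpr ⟨m, mem_graphBall_comm hsymm hm⟩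

theorem mem_graphBall_of_graphDist_le {x y : X} {m : ℕ} (h : graphDist G x y ≤ m) :
    y ∈ graphBall G x m := by
  have hlt : graphDist G x y < (m + 1 : ℕ) := h.trans_lt (by exact_mod_cast Nat.lt_succ_self m)
  obtain ⟨_, ⟨k, f, rfl, hf⟩, hk⟩ := sInf_lt_iff.mp hlt
  exact ⟨k, Nat.lt_succ_iff.mp (by exact_mod_cast hk), f, hf⟩

theorem mem_graphBall_of_gdiam_le {A : Set X} {x y : X} {m : ℕ} (h : gdiam G A ≤ m)
    (hx : x ∈ A) (hy : y ∈ A) : y ∈ graphBall G x m :=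
  mem_graphBall_of_graphDist_le <| le_trans
    ((le_biSup (graphDist G x) hy).trans (le_biSup (fun x' => ⨆ y' ∈ A, graphDist G x' y') hx)) h

theorem exists_mem_innerB_mem_graphBall {C : Set X} {x y : X} {n : ℕ}
    (hy : y ∈ graphBall G x n) (hx : x ∈ C) (hyC : y ∉ C) :
    ∃ q ∈ innerB G C, q ∈ graphBall G x n := by
  induction n generalizing y with
  | zero => exact absurd (mem_graphBall_zero.mp hy ▸ hx) hyC
  | succ n ih =>
    rcases mem_graphBall_succ.mp hy with hy | ⟨w, hw, hwy⟩
    · obtain ⟨q, hq, hqx⟩ := ih hy hyC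
      exact ⟨q, hq, graphBall_mono (Nat.le_succ n) hqx⟩
    · by_cases hwC : w ∈ C
      · exact ⟨w, ⟨hwC, y, hyC, hwy⟩, graphBall_mono (Nat.le_succ n) hw⟩
      · obtain ⟨q, hq, hqx⟩ := ih hw hwC
        exact ⟨q, hq, graphBall_mono (Nat.le_succ n) hqx⟩

theorem encard_biUnion_le_mul {ι α : Type*} {s : Set ι} (hs : s.Finite) (t : ι → Set α)
    {k : ℕ∞} (ht : ∀ i, (t i).encard ≤ k) : (⋃ i ∈ s, t i).encard ≤ s.encard * k := by
  induction s, hs using Finite.induction_on with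
  | empty => simp
  | @insert i s hi _ ih =>
    rw [biUnion_insert, encard_insert_of_notMem hi, add_mul, one_mul, add_comm]
    exact (encard_union_le _ _).trans (add_le_add (ht i) ih)

theorem encard_graphBall_le {d : ℕ} (hd : ∀ x : X, {y | (x, y) ∈ G}.encard ≤ d) (x : X)
    (m : ℕ) : (graphBall G x m).encard ≤ ((d + 1) ^ (m + 1) : ℕ) := by
  induction m with
  | zero =>
    have : graphBall G x 0 = {x} := ext fun _ => mem_graphBall_zero
    simp [this]
  | succ m ih =>
    have hsub : graphBall G x (m + 1) ⊆ ⋃ y ∈ graphBall G x m, insert y {z | (y, z) ∈ G} := by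
      intro z hz
      rcases mem_graphBall_succ.mp hz with hz | ⟨y, hy, hyz⟩
      · exact mem_biUnion hz (mem_insert z _)
      · exact mem_biUnion hy (mem_insert_of_mem y hyz)
    calc (graphBall G x (m + 1)).encard
        ≤ (graphBall G x m).encard * (d + 1) :=
          (encard_le_encard hsub).trans <| encard_biUnion_le_mul (finite_of_encard_le_coe ih) _
            fun y => (encard_insert_le _ _).trans (add_le_add_left (hd y) 1)
      _ ≤ ((d + 1) ^ (m + 1) : ℕ) * (d + 1) := mul_le_mul_left ih _
      _ = ((d + 1) ^ (m + 2) : ℕ) := by push_cast; ring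

theorem mem_cls_of_adj {x y z : X} (hy : y ∈ cls G x) (h : (y, z) ∈ G) : z ∈ cls G x :=
  Reach.trans hy (reach_iff_exists_mem_graphBall.mpr ⟨1, mem_graphBall_one_of_adj h⟩)

theorem cls_eq_of_mem (hsymm : ∀ p ∈ G, (p.2, p.1) ∈ G) {x y : X} (hy : y ∈ cls G x) :
    cls G y = cls G x :=
  ext fun _ => ⟨Reach.trans hy, Reach.trans (Reach.symm hsymm hy)⟩

theorem innerB_nonempty_of_reach {S : Set X} {x y : X} (hx : x ∈ S) (hy : y ∉ S)
    (h : Reach G x y) : (innerB G S).Nonempty := by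
  obtain ⟨m, hm⟩ := reach_iff_exists_mem_graphBall.mp h
  obtain ⟨q, hq, -⟩ := exists_mem_innerB_mem_graphBall hm hx hy
  exact ⟨q, hq⟩

theorem cCompl_eq_sdiff (hsymm : ∀ p ∈ G, (p.2, p.1) ∈ G) {C : Set X} {x : X}
    (hC : C ⊆ cls G x) (hne : C.Nonempty) : cCompl G C = cls G x \ C := by
  obtain ⟨z, hz⟩ := hne
  ext y
  constructor
  · rintro ⟨hyC, w, hw, hwy⟩
    exact ⟨Reach.trans (hC hw) hwy, hyC⟩
  · rintro ⟨hy, hyC⟩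
    exact ⟨hyC, z, hz, Reach.trans (Reach.symm hsymm (hC hz)) hy⟩

namespace IsCut

variable {C : Set X} {x : X}

theorem subset_cls (hsymm : ∀ p ∈ G, (p.2, p.1) ∈ G) (hC : IsCut G C) (hx : x ∈ C) :
    C ⊆ cls G x := by
  obtain ⟨⟨x₀, -, hsub, -⟩, -⟩ := hC
  rwa [cls_eq_of_mem hsymm (hsub hx)]

theorem exists_mem_cls_notMem (hsymm : ∀ p ∈ G, (p.2, p.1) ∈ G) (hC : IsCut G C)
    (hx : x ∈ C) : ∃ y ∈ cls G x, y ∉ C := by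
  obtain ⟨⟨x₀, -, hsub, hne⟩, -⟩ := hC
  rw [cls_eq_of_mem hsymm (hsub hx)]
  by_contra! h
  exact hne (hsub.antisymm h)

theorem innerB_nonempty (hsymm : ∀ p ∈ G, (p.2, p.1) ∈ G) (hC : IsCut G C) :
    (innerB G C).Nonempty := by
  obtain ⟨x, hx, -⟩ := hC.1
  obtain ⟨y, hy, hyC⟩ := hC.exists_mem_cls_notMem hsymm hx
  exact innerB_nonempty_of_reach hx hyC hy

theorem cCompl_cCompl (hsymm : ∀ p ∈ G, (p.2, p.1) ∈ G) (hC : IsCut G C) :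
    cCompl G (cCompl G C) = C := by
  obtain ⟨x, hx, -⟩ := hC.1
  have hsub := hC.subset_cls hsymm hx
  obtain ⟨y, hy, hyC⟩ := hC.exists_mem_cls_notMem hsymm hx
  rw [cCompl_eq_sdiff hsymm hsub ⟨x, hx⟩, cCompl_eq_sdiff hsymm sdiff_subset ⟨y, hy, hyC⟩,
    sdiff_sdiff_cancel_left hsub]

/-- An edge leaving `C \ D` starts in `T`, where `C` and `D` agree; so `C \ D` contains no
such edge and, lying in the cut `C`, is empty. -/
theorem subset_of_inter_subset (hsymm : ∀ p ∈ G, (p.2, p.1) ∈ G) {D T : Set X}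
    (hC : IsCut G C) (hCT : innerB G C ⊆ T) (hDT : outerB G D ⊆ T) (h : C ∩ T ⊆ D) :
    C ⊆ D := by
  intro v hv
  by_contra hvD
  obtain ⟨y, hy, hyC⟩ := hC.exists_mem_cls_notMem hsymm hv
  obtain ⟨q, ⟨hqC, hqD⟩, w, hw, hqw⟩ :=
    innerB_nonempty_of_reach (S := C \ D) ⟨hv, hvD⟩ (fun h => hyC h.1) hy
  have hqT : q ∈ T := by
    by_cases hwC : w ∈ C
    · exact hDT ⟨hqD, w, not_not.mp fun hwD => hw ⟨hwC, hwD⟩, hqw⟩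
    · exact hCT ⟨hqC, w, hwC, hqw⟩
  exact hqD (h ⟨hqC, hqT⟩)

end IsCut

theorem outerB_subset_graphBall (hsymm : ∀ p ∈ G, (p.2, p.1) ∈ G) {C : Set X} {p : X}
    {R : ℕ} (h : innerB G C ⊆ graphBall G p R) : outerB G C ⊆ graphBall G p (R + 1) := by
  rintro y ⟨hy, x, hx, hyx⟩
  exact mem_graphBall_trans (h ⟨hx, y, hy, hsymm _ hyx⟩) (mem_graphBall_one_of_adj (hsymm _ hyx))

theorem encard_setOf_isCut_innerB_subset_le (hsymm : ∀ p ∈ G, (p.2, p.1) ∈ G) {d : ℕ}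
    (hd : ∀ x : X, {y | (x, y) ∈ G}.encard ≤ d) (p : X) (R : ℕ) :
    {C | IsCut G C ∧ innerB G C ⊆ graphBall G p R}.encard ≤ (2 ^ (d + 1) ^ (R + 2) : ℕ) := by
  set T := graphBall G p (R + 1)
  have hT : T.encard ≤ ((d + 1) ^ (R + 2) : ℕ) := encard_graphBall_le hd p (R + 1)
  have hTfin : T.Finite := finite_of_encard_le_coe hT
  have hbdry {E : Set X} (hE : innerB G E ⊆ graphBall G p R) : innerB G E ⊆ T ∧ outerB G E ⊆ T :=
    ⟨hE.trans (graphBall_mono (Nat.le_succ R)), outerB_subset_graphBall hsymm hE⟩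
  have hinj : InjOn (· ∩ T) {C | IsCut G C ∧ innerB G C ⊆ graphBall G p R} := by
    intro C ⟨hC, hCp⟩ D ⟨hD, hDp⟩ h
    exact (hC.subset_of_inter_subset hsymm (hbdry hCp).1 (hbdry hDp).2
      (h.subset.trans inter_subset_left)).antisymm
      (hD.subset_of_inter_subset hsymm (hbdry hDp).1 (hbdry hCp).2
        (h.symm.subset.trans inter_subset_left))
  calc _ ≤ (𝒫 T).encard := encard_le_encard_of_injOn (fun C _ => inter_subset_right) hinj
    _ = (2 ^ T.ncard : ℕ) := by rw [← hTfin.powerset.cast_ncard_eq, ncard_powerset T hTfin]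
    _ ≤ (2 ^ (d + 1) ^ (R + 2) : ℕ) := by
      rw [← hTfin.cast_ncard_eq, Nat.cast_le] at hT
      exact_mod_cast Nat.pow_le_pow_right two_pos hT

theorem finite_setOf_separating (hsymm : ∀ p ∈ G, (p.2, p.1) ∈ G) {d r : ℕ}
    (hd : ∀ x : X, {y | (x, y) ∈ G}.encard ≤ d) {𝒞 : Set (Set X)}
    (hcut : ∀ C ∈ 𝒞, IsCut G C) (hbdd : ∀ C ∈ 𝒞, gdiam G (innerB G C) ≤ r) {x y : X}
    (h : Reach G x y) : {C | C ∈ 𝒞 ∧ x ∈ C ∧ y ∉ C}.Finite := by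
  obtain ⟨n, hn⟩ := reach_iff_exists_mem_graphBall.mp h
  refine (finite_of_encard_le_coe
    (encard_setOf_isCut_innerB_subset_le hsymm hd x (n + r))).subset ?_
  rintro C ⟨hC, hxC, hyC⟩
  obtain ⟨q, hq, hqx⟩ := exists_mem_innerB_mem_graphBall hn hxC hyC
  exact ⟨hcut C hC, fun q' hq' =>
    mem_graphBall_trans hqx (mem_graphBall_of_gdiam_le (hbdd C hC) hq hq')⟩

def Crosses (ω C D : Set X) : Prop :=
  (C ∩ D).Nonempty ∧ (C ∩ (ω \ D)).Nonempty ∧ ((ω \ C) ∩ D).Nonempty ∧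
    ((ω \ C) ∩ (ω \ D)).Nonempty

namespace Crosses

variable {ω C D : Set X}

theorem symm (h : Crosses ω C D) : Crosses ω D C := by
  obtain ⟨h₁, h₂, h₃, h₄⟩ := h
  exact ⟨inter_comm C D ▸ h₁, inter_comm _ D ▸ h₃, inter_comm C _ ▸ h₂, inter_comm _ (ω \ D) ▸ h₄⟩

theorem sdiff_left (hC : C ⊆ ω) (h : Crosses ω C D) : Crosses ω (ω \ C) D := by
  obtain ⟨h₁, h₂, h₃, h₄⟩ := h
  rw [Crosses, sdiff_sdiff_cancel_left hC]
  exact ⟨h₃, h₄, h₁, h₂⟩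

theorem sdiff_right (hD : D ⊆ ω) (h : Crosses ω C D) : Crosses ω C (ω \ D) :=
  (h.symm.sdiff_left hD).symm

theorem not_self : ¬Crosses ω C C := fun ⟨_, ⟨_, hv, _, hv'⟩, _⟩ => hv' hv

end Crosses

theorem not_crosses_iff {ω C D : Set X} : ¬Crosses ω C D ↔
    C ∩ D = ∅ ∨ C ∩ (ω \ D) = ∅ ∨ (ω \ C) ∩ D = ∅ ∨ (ω \ C) ∩ (ω \ D) = ∅ := by
  simp only [Crosses, ← not_nonempty_iff_eq_empty]
  tauto

theorem nestedPair_iff_not_crosses (hsymm : ∀ p ∈ G, (p.2, p.1) ∈ G) {C D : Set X} {x : X}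
    (hC : C ⊆ cls G x) (hD : D ⊆ cls G x) (hCne : C.Nonempty) (hDne : D.Nonempty) :
    NestedPair G C D ↔ ¬Crosses (cls G x) C D := by
  rw [NestedPair, cCompl_eq_sdiff hsymm hC hCne, cCompl_eq_sdiff hsymm hD hDne, not_crosses_iff]

def vertexBoundary (G : Set (X × X)) (C : Set X) : Set X := innerB G C ∪ outerB G C

section vertexBoundary

variable {C D : Set X} {x : X}

theorem vertexBoundary_subset_cls (hsymm : ∀ p ∈ G, (p.2, p.1) ∈ G) (hC : C ⊆ cls G x) :
    vertexBoundary G C ⊆ cls G x := by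
  rintro v (⟨hv, -⟩ | ⟨-, w, hw, hvw⟩)
  exacts [hC hv, mem_cls_of_adj (hC hw) (hsymm _ hvw)]

theorem vertexBoundary_sdiff (hsymm : ∀ p ∈ G, (p.2, p.1) ∈ G) (hC : C ⊆ cls G x) :
    vertexBoundary G (cls G x \ C) = vertexBoundary G C := by
  have hin : innerB G (cls G x \ C) = outerB G C := by
    ext v
    constructor
    · rintro ⟨⟨hv, hvC⟩, w, hw, hvw⟩
      exact ⟨hvC, w, not_not.mp fun hwC => hw ⟨mem_cls_of_adj hv hvw, hwC⟩, hvw⟩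
    · rintro ⟨hvC, w, hwC, hvw⟩
      exact ⟨⟨mem_cls_of_adj (hC hwC) (hsymm _ hvw), hvC⟩, w, fun h => h.2 hwC, hvw⟩
  have hout : outerB G (cls G x \ C) = innerB G C := by
    ext v
    constructor
    · rintro ⟨hv, w, ⟨hw, hwC⟩, hvw⟩
      exact ⟨not_not.mp fun hvC => hv ⟨mem_cls_of_adj hw (hsymm _ hvw), hvC⟩, w, hwC, hvw⟩
    · rintro ⟨hvC, w, hwC, hvw⟩
      exact ⟨fun h => h.2 hvC, w, ⟨mem_cls_of_adj (hC hvC) hvw, hwC⟩, hvw⟩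
  rw [vertexBoundary, vertexBoundary, hin, hout, union_comm]

theorem exists_mem_innerB_of_mem_vertexBoundary (hsymm : ∀ p ∈ G, (p.2, p.1) ∈ G) {v : X}
    (hv : v ∈ vertexBoundary G C) : ∃ p ∈ innerB G C, v ∈ graphBall G p 1 := by
  rcases hv with hv | ⟨hvC, w, hwC, hvw⟩
  · exact ⟨v, hv, self_mem_graphBall v 1⟩
  · exact ⟨w, ⟨hwC, v, hvC, hsymm _ hvw⟩, mem_graphBall_one_of_adj (hsymm _ hvw)⟩

theorem mem_graphBall_of_mem_vertexBoundary (hsymm : ∀ p ∈ G, (p.2, p.1) ∈ G) {r : ℕ}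
    (hr : gdiam G (innerB G C) ≤ r) {a b : X} (ha : a ∈ vertexBoundary G C)
    (hb : b ∈ vertexBoundary G C) : b ∈ graphBall G a (r + 2) := by
  obtain ⟨p, hp, hap⟩ := exists_mem_innerB_of_mem_vertexBoundary hsymm ha
  obtain ⟨q, hq, hbq⟩ := exists_mem_innerB_of_mem_vertexBoundary hsymm hb
  have h := mem_graphBall_trans (mem_graphBall_trans (mem_graphBall_comm hsymm hap)
    (mem_graphBall_of_gdiam_le hr hp hq)) hbq
  exact graphBall_mono (by omega) h

/-- The corner opposite to both boundaries is closed under edges, hence empty. -/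
theorem not_crosses_of_vertexBoundary_subset (hsymm : ∀ p ∈ G, (p.2, p.1) ∈ G)
    (hC : C ⊆ cls G x) (hCD : vertexBoundary G C ⊆ D) (hDC : vertexBoundary G D ⊆ C) :
    ¬Crosses (cls G x) C D := by
  rintro ⟨⟨c, hcC, -⟩, -, -, ⟨z, ⟨hz, hzC⟩, -, hzD⟩⟩
  obtain ⟨q, ⟨⟨hq, hqC⟩, -, hqD⟩, w, hw, hqw⟩ :=
    innerB_nonempty_of_reach (S := (cls G x \ C) ∩ (cls G x \ D)) ⟨⟨hz, hzC⟩, hz, hzD⟩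
      (fun h => h.1.2 hcC) (Reach.trans (Reach.symm hsymm hz) (hC hcC))
  by_cases hwC : w ∈ C
  · exact hqD (hCD (Or.inr ⟨hqC, w, hwC, hqw⟩))
  · have hwx := mem_cls_of_adj hq hqw
    have hwD : w ∈ D := not_not.mp fun hwD => hw ⟨⟨hwx, hwC⟩, hwx, hwD⟩
    exact hqC (hDC (Or.inr ⟨hqD, w, hwD, hqw⟩))

theorem exists_innerB_near_of_not_vertexBoundary_subset (hsymm : ∀ p ∈ G, (p.2, p.1) ∈ G)
    {r : ℕ} (hC : C ⊆ cls G x) (hr : gdiam G (innerB G C) ≤ r)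
    (h : ¬(vertexBoundary G C ⊆ D ∨ vertexBoundary G C ⊆ cls G x \ D)) :
    ∃ p ∈ innerB G C, ∃ q ∈ innerB G D, q ∈ graphBall G p (r + 3) := by
  obtain ⟨ha, hb⟩ := not_or.mp h
  obtain ⟨a, ha, haD⟩ := not_subset.mp ha
  obtain ⟨b, hb, hbD⟩ := not_subset.mp hb
  have hbD : b ∈ D := not_not.mp fun h => hbD ⟨vertexBoundary_subset_cls hsymm hC hb, h⟩
  obtain ⟨p, hp, hbp⟩ := exists_mem_innerB_of_mem_vertexBoundary hsymm hb
  obtain ⟨q, hq, hqb⟩ := exists_mem_innerB_mem_graphBall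
    (mem_graphBall_of_mem_vertexBoundary hsymm hr hb ha) hbD haD
  exact ⟨p, hp, q, hq, graphBall_mono (by omega) (mem_graphBall_trans hbp hqb)⟩

theorem exists_innerB_near_of_crosses (hsymm : ∀ p ∈ G, (p.2, p.1) ∈ G) {r : ℕ}
    (hC : C ⊆ cls G x) (hD : D ⊆ cls G x) (hrC : gdiam G (innerB G C) ≤ r)
    (hrD : gdiam G (innerB G D) ≤ r) (h : Crosses (cls G x) C D) :
    ∃ p ∈ innerB G C, ∃ q ∈ innerB G D, q ∈ graphBall G p (r + 3) := by
  by_cases hCside : vertexBoundary G C ⊆ D ∨ vertexBoundary G C ⊆ cls G x \ D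
  · by_cases hDside : vertexBoundary G D ⊆ C ∨ vertexBoundary G D ⊆ cls G x \ C
    · exfalso
      rcases hCside with hCs | hCs <;> rcases hDside with hDs | hDs
      · exact not_crosses_of_vertexBoundary_subset hsymm hC hCs hDs h
      · exact not_crosses_of_vertexBoundary_subset hsymm sdiff_subset
          (by rwa [vertexBoundary_sdiff hsymm hC]) hDs (h.sdiff_left hC)
      · exact not_crosses_of_vertexBoundary_subset hsymm hC hCs
          (by rwa [vertexBoundary_sdiff hsymm hD]) (h.sdiff_right hD)
      · exact not_crosses_of_vertexBoundary_subset hsymm sdiff_subset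
          (by rwa [vertexBoundary_sdiff hsymm hC]) (by rwa [vertexBoundary_sdiff hsymm hD])
          ((h.sdiff_left hC).sdiff_right hD)
    · obtain ⟨q, hq, p, hp, hpq⟩ :=
        exists_innerB_near_of_not_vertexBoundary_subset hsymm hD hrD hDside
      exact ⟨p, hp, q, hq, mem_graphBall_comm hsymm hpq⟩
  · exact exists_innerB_near_of_not_vertexBoundary_subset hsymm hC hrC hCside

theorem innerB_subset_graphBall_of_crosses (hsymm : ∀ p ∈ G, (p.2, p.1) ∈ G) {r : ℕ}
    (hC : C ⊆ cls G x) (hD : D ⊆ cls G x) (hrC : gdiam G (innerB G C) ≤ r)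
    (hrD : gdiam G (innerB G D) ≤ r) (h : Crosses (cls G x) C D) {p₀ : X}
    (hp₀ : p₀ ∈ innerB G C) : innerB G D ⊆ graphBall G p₀ (3 * r + 3) := by
  obtain ⟨p, hp, q, hq, hpq⟩ := exists_innerB_near_of_crosses hsymm hC hD hrC hrD h
  intro q' hq'
  exact graphBall_mono (by omega) (mem_graphBall_trans (mem_graphBall_trans
    (mem_graphBall_of_gdiam_le hrC hp₀ hp) hpq) (mem_graphBall_of_gdiam_le hrD hq hq'))

end vertexBoundary

theorem SimpleGraph.colorable_of_encard_neighborSet_le {V : Type*} (H : SimpleGraph V) {N : ℕ}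
    (h : ∀ v, (H.neighborSet v).encard ≤ N) : H.Colorable (N + 1) := by
  -- greedy colouring along a well-order: each vertex takes the least colour not used by its
  -- earlier neighbours, and at most `N` colours are excluded
  have hwf : WellFounded (WellOrderingRel (α := V)) := IsWellFounded.wf
  let c : V → ℕ := hwf.fix fun v c' =>
    sInf {i | ∀ w (hw : WellOrderingRel w v), H.Adj v w → c' w hw ≠ i}
  let free (v : V) : Set ℕ := {i | ∀ w, WellOrderingRel w v → H.Adj v w → c w ≠ i}
  have hc (v : V) : c v = sInf (free v) := hwf.fix_eq _ v
  have hfree (v : V) : ∃ i ≤ N, i ∈ free v := by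
    by_contra! hall
    have hsub : ((Finset.range (N + 1) : Finset ℕ) : Set ℕ) ⊆ c '' H.neighborSet v := by
      intro i hi
      have hi : i ∉ free v := hall i (Nat.lt_succ_iff.mp (Finset.mem_range.mp hi))
      simp only [free, mem_ofPred_eq, not_forall, not_not] at hi
      obtain ⟨w, -, hw, hwi⟩ := hi
      exact ⟨w, hw, hwi⟩
    have := (encard_le_encard hsub).trans ((encard_image_le c _).trans (h v))
    rw [encard_coe_eq_coe_finsetCard, Finset.card_range, Nat.cast_le] at this
    omega
  have hc_mem (v : V) : c v ∈ free v := by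
    obtain ⟨i, -, hi⟩ := hfree v
    exact hc v ▸ Nat.sInf_mem ⟨i, hi⟩
  have hle (v : V) : c v ≤ N := by
    obtain ⟨i, hiN, hi⟩ := hfree v
    exact (hc v).trans_le ((Nat.sInf_le hi).trans hiN)
  refine ⟨Coloring.mk (fun v => ⟨c v, Nat.lt_succ_of_le (hle v)⟩) fun {v w} hvw heq => ?_⟩
  have heq : c v = c w := Fin.val_eq_of_eq heq
  rcases trichotomous_of WellOrderingRel v w with hvw' | rfl | hwv
  · exact hc_mem w v hvw' hvw.symm heq
  · exact H.loopless.irrefl v hvw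
  · exact hc_mem v w hwv hvw heq.symm

def crossGraph (G : Set (X × X)) (𝒞 : Set (Set X)) : SimpleGraph (Set X) where
  Adj C D := C ∈ 𝒞 ∧ D ∈ 𝒞 ∧ ∃ x, C ⊆ cls G x ∧ D ⊆ cls G x ∧ Crosses (cls G x) C D
  symm := ⟨fun _ _ ⟨hC, hD, x, hCx, hDx, h⟩ => ⟨hD, hC, x, hDx, hCx, h.symm⟩⟩
  loopless := ⟨fun _ ⟨_, _, _, _, _, h⟩ => Crosses.not_self h⟩

theorem encard_neighborSet_crossGraph_le (hsymm : ∀ p ∈ G, (p.2, p.1) ∈ G) {d r : ℕ}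
    (hd : ∀ x : X, {y | (x, y) ∈ G}.encard ≤ d) {𝒞 : Set (Set X)}
    (hcut : ∀ C ∈ 𝒞, IsCut G C) (hbdd : ∀ C ∈ 𝒞, gdiam G (innerB G C) ≤ r) (C : Set X) :
    ((crossGraph G 𝒞).neighborSet C).encard ≤ (2 ^ (d + 1) ^ (3 * r + 5) : ℕ) := by
  by_cases hC : C ∈ 𝒞
  · obtain ⟨p, hp⟩ := (hcut C hC).innerB_nonempty hsymm
    refine (encard_le_encard fun D hD => ?_).trans
      (encard_setOf_isCut_innerB_subset_le hsymm hd p (3 * r + 3))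
    obtain ⟨-, hD, x, hCx, hDx, h⟩ := hD
    exact ⟨hcut D hD,
      innerB_subset_graphBall_of_crosses hsymm hCx hDx (hbdd C hC) (hbdd D hD) h hp⟩
  · have hempty : (crossGraph G 𝒞).neighborSet C = ∅ :=
      eq_empty_of_forall_notMem fun D hD => hC hD.1
    simp [hempty]

def colorClass {α : Type*} (G : Set (X × X)) (𝒞 : Set (Set X)) (c : Set X → α) (a : α) :
    Set (Set X) :=
  {C | C ∈ 𝒞 ∧ (c C = a ∨ c (cCompl G C) = a)}

section colorClass

variable {α : Type*} {𝒞 : Set (Set X)} {c : Set X → α} {a : α}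

theorem cCompl_mem_colorClass (hsymm : ∀ p ∈ G, (p.2, p.1) ∈ G) (hcut : ∀ C ∈ 𝒞, IsCut G C)
    (hcompl : ∀ C ∈ 𝒞, cCompl G C ∈ 𝒞) {C : Set X} (hC : C ∈ colorClass G 𝒞 c a) :
    cCompl G C ∈ colorClass G 𝒞 c a :=
  ⟨hcompl C hC.1, by rw [(hcut C hC.1).cCompl_cCompl hsymm]; exact hC.2.symm⟩

theorem exists_crosses_of_mem_colorClass (hsymm : ∀ p ∈ G, (p.2, p.1) ∈ G)
    (hcompl : ∀ C ∈ 𝒞, cCompl G C ∈ 𝒞) {C D : Set X} {x : X} (hC : C ∈ colorClass G 𝒞 c a)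
    (hCx : C ⊆ cls G x) (h : Crosses (cls G x) C D) :
    ∃ C' ∈ 𝒞, c C' = a ∧ C' ⊆ cls G x ∧ Crosses (cls G x) C' D := by
  obtain ⟨hC, hCa | hCa⟩ := hC
  · exact ⟨C, hC, hCa, hCx, h⟩
  · refine ⟨cCompl G C, hcompl C hC, hCa, ?_⟩
    rw [cCompl_eq_sdiff hsymm hCx (h.1.mono inter_subset_left)]
    exact ⟨sdiff_subset, h.sdiff_left hCx⟩

theorem not_crosses_of_mem_colorClass (hsymm : ∀ p ∈ G, (p.2, p.1) ∈ G)
    (hcompl : ∀ C ∈ 𝒞, cCompl G C ∈ 𝒞) (hc : ∀ {C D}, (crossGraph G 𝒞).Adj C D → c C ≠ c D)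
    {C D : Set X} (hC : C ∈ colorClass G 𝒞 c a) (hD : D ∈ colorClass G 𝒞 c a) {x : X}
    (hCx : C ⊆ cls G x) (hDx : D ⊆ cls G x) : ¬Crosses (cls G x) C D := by
  intro h
  obtain ⟨C', hC', hC'a, hC'x, h⟩ := exists_crosses_of_mem_colorClass hsymm hcompl hC hCx h
  obtain ⟨D', hD', hD'a, hD'x, h⟩ := exists_crosses_of_mem_colorClass hsymm hcompl hD hDx h.symm
  exact hc ⟨hC', hD', x, hC'x, hD'x, h.symm⟩ (hC'a.trans hD'a.symm)

end colorClass

theorem nestedPair_of_not_crosses (hsymm : ∀ p ∈ G, (p.2, p.1) ∈ G) {C D : Set X}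
    (hC : IsCut G C) (hD : IsCut G D)
    (h : ∀ x, C ⊆ cls G x → D ⊆ cls G x → ¬Crosses (cls G x) C D) (hCD : SameClass G C D) :
    NestedPair G C D := by
  obtain ⟨x, hx, y, hy, hxy⟩ := hCD
  have hCx := hC.subset_cls hsymm hx
  have hDx : D ⊆ cls G x := cls_eq_of_mem hsymm hxy ▸ hD.subset_cls hsymm hy
  exact (nestedPair_iff_not_crosses hsymm hCx hDx ⟨x, hx⟩ ⟨y, hy⟩).mpr (h x hCx hDx)

theorem isTreesetOn_cls (hsymm : ∀ p ∈ G, (p.2, p.1) ∈ G) {𝒟 : Set (Set X)}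
    (hcut : ∀ C ∈ 𝒟, IsCut G C) (hcompl : ∀ C ∈ 𝒟, cCompl G C ∈ 𝒟)
    (hnc : ∀ C ∈ 𝒟, ∀ D ∈ 𝒟, ∀ x, C ⊆ cls G x → D ⊆ cls G x → ¬Crosses (cls G x) C D)
    (hsep : ∀ x y, Reach G x y → {C | C ∈ 𝒟 ∧ x ∈ C ∧ y ∉ C}.Finite) (x : X) :
    IsTreesetOn (cls G x) {C | C ∈ 𝒟 ∧ C ⊆ cls G x} := by
  have hproper {C : Set X} (hC : C ∈ 𝒟) (hCx : C ⊆ cls G x) :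
      ∃ y ∈ C, ∃ z ∈ cls G x, z ∉ C := by
    obtain ⟨y, hy, -⟩ := (hcut C hC).1
    obtain ⟨z, hz, hzC⟩ := (hcut C hC).exists_mem_cls_notMem hsymm hy
    exact ⟨y, hy, z, cls_eq_of_mem hsymm (hCx hy) ▸ hz, hzC⟩
  refine ⟨fun C ⟨hC, hCx⟩ => ?_, fun C ⟨hC, hCx⟩ D ⟨hD, hDx⟩ => ?_, fun C ⟨hC, hCx⟩ => ?_,
    fun y hy z hz => ?_⟩
  · obtain ⟨y, hy, z, hz, hzC⟩ := hproper hC hCx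
    exact ⟨hCx, ⟨y, hy⟩, fun h => hzC (h ▸ hz)⟩
  · exact not_crosses_iff.mp (hnc C hC D hD x hCx hDx)
  · obtain ⟨y, hy, -⟩ := hproper hC hCx
    rw [← cCompl_eq_sdiff hsymm hCx ⟨y, hy⟩]
    exact ⟨hcompl C hC, cCompl_eq_sdiff hsymm hCx ⟨y, hy⟩ ▸ sdiff_subset⟩
  · exact (hsep y z (Reach.trans (Reach.symm hsymm hy) hz)).subset fun C hC => ⟨hC.1.1, hC.2⟩

end

/-- A cutset with uniformly bounded boundaries closed under complementation
decomposes into finitely many cutsets, each nested, closed under complementation, with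
uniformly bounded boundaries and finitely separating on each class (i.e. a treeset on each
`E_G`-class). -/
theorem cutset_decomposes_into_treesets {X : Type*} (G : Set (X × X))
    (hG : IsGraph G) (hdeg : BddDeg G)
    (𝒞 : Set (Set X)) (hcut : ∀ C ∈ 𝒞, IsCut G C)
    (r : ℕ) (hbdd : ∀ C ∈ 𝒞, gdiam G (innerB G C) ≤ (r : ℕ∞))
    (hcompl : ∀ C ∈ 𝒞, cCompl G C ∈ 𝒞) :
    ∃ (n : ℕ) (𝒟 : ℕ → Set (Set X)),
      𝒞 = (⋃ i ∈ Finset.range (n + 1), 𝒟 i) ∧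
      ∀ i ≤ n, 𝒟 i ⊆ 𝒞 ∧
        (∀ C ∈ 𝒟 i, ∀ D ∈ 𝒟 i, SameClass G C D → NestedPair G C D) ∧
        (∀ C ∈ 𝒟 i, cCompl G C ∈ 𝒟 i) ∧
        (∃ s : ℕ, ∀ C ∈ 𝒟 i, gdiam G (innerB G C) ≤ (s : ℕ∞)) ∧
        (∀ x y : X, Reach G x y → {C | C ∈ 𝒟 i ∧ x ∈ C ∧ y ∉ C}.Finite) ∧
        (∀ x : X, IsTreesetOn (cls G x) {C | C ∈ 𝒟 i ∧ C ⊆ cls G x}) := by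
  obtain ⟨hsymm, -⟩ := hG
  obtain ⟨d, hd⟩ := hdeg
  obtain ⟨col⟩ := (crossGraph G 𝒞).colorable_of_encard_neighborSet_le
    (encard_neighborSet_crossGraph_le hsymm hd hcut hbdd)
  let c : Set X → ℕ := fun C => col C
  have hc {C D : Set X} (h : (crossGraph G 𝒞).Adj C D) : c C ≠ c D :=
    Fin.val_injective.ne (col.valid h)
  refine ⟨2 ^ (d + 1) ^ (3 * r + 5), colorClass G 𝒞 c, ?_, fun i _ => ?_⟩
  · ext C
    simp only [mem_iUnion, Finset.mem_range, exists_prop]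
    exact ⟨fun hC => ⟨c C, (col C).2, hC, Or.inl rfl⟩, fun ⟨_, _, hC, _⟩ => hC⟩
  have hcut' : ∀ C ∈ colorClass G 𝒞 c i, IsCut G C := fun C hC => hcut C hC.1
  have hcompl' : ∀ C ∈ colorClass G 𝒞 c i, cCompl G C ∈ colorClass G 𝒞 c i :=
    fun C hC => cCompl_mem_colorClass hsymm hcut hcompl hC
  have hnc : ∀ C ∈ colorClass G 𝒞 c i, ∀ D ∈ colorClass G 𝒞 c i, ∀ x,
      C ⊆ cls G x → D ⊆ cls G x → ¬Crosses (cls G x) C D :=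
    fun C hC D hD x => not_crosses_of_mem_colorClass hsymm hcompl hc hC hD
  have hsep : ∀ x y, Reach G x y → {C | C ∈ colorClass G 𝒞 c i ∧ x ∈ C ∧ y ∉ C}.Finite :=
    fun x y h => (finite_setOf_separating hsymm hd hcut hbdd h).subset
      fun C hC => ⟨hC.1.1, hC.2⟩
  exact ⟨fun C hC => hC.1,
    fun C hC D hD => nestedPair_of_not_crosses hsymm (hcut' C hC) (hcut' D hD) (hnc C hC D hD),
    hcompl', ⟨r, fun C hC => hbdd C hC.1⟩, hsep, isTreesetOn_cls hsymm hcut' hcompl' hnc hsep⟩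
end

section
/- Let (Y,G') and (X,G) be graphs with uniformly bounded degrees, λ : (Y,G') → (X,G) a quasi-isometry, and 𝒞 a cutset of G with uniformly bounded boundaries. Then λ⁻¹(𝒞)* := {λ⁻¹(C) : C ∈ 𝒞} ∩ Cut(G') is a cutset of G' with uniformly bounded boundaries (here Cut(G') denotes the set of all cuts of G'). -/
open Set

/-- `γ` is a *quasi-isometry* from `(α, E)` to `(β, E')`: bi-Lipschitz up to additive
constants on the extended path metrics (in particular `d_E < ∞ ↔ d_{E'} < ∞`), with
quasi-dense image. -/
def IsQI {α β : Type*} (E : Set (α × α)) (E' : Set (β × β)) (γ : α → β) : Prop :=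
  (∃ l c : ℕ, 1 ≤ l ∧ ∀ x₁ x₂ : α,
      graphDist E' (γ x₁) (γ x₂) ≤ (l : ℕ∞) * graphDist E x₁ x₂ + (c : ℕ∞) ∧
      graphDist E x₁ x₂ ≤ (l : ℕ∞) * graphDist E' (γ x₁) (γ x₂) + (c : ℕ∞)) ∧
  (∃ k : ℕ, ∀ y : β, ∃ x : α, graphDist E' y (γ x) ≤ (k : ℕ∞))
lemma dist_le_of_walk' {α : Type*} {E : Set (α × α)} {x y : α} {n : ℕ} (f : ℕ → α)
    (h0 : f 0 = x) (hn : f n = y) (hw : IsWalk E f n) : graphDist E x y ≤ (n : ℕ∞) :=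
  sInf_le ⟨n, f, rfl, h0, hn, hw⟩

lemma exists_walk_of_dist_le' {α : Type*} {E : Set (α × α)} {x y : α} {n : ℕ}
    (h : graphDist E x y ≤ (n : ℕ∞)) :
    ∃ m ≤ n, ∃ f : ℕ → α, f 0 = x ∧ f m = y ∧ IsWalk E f m := by
  by_contra hc
  push_neg at hc
  have h2 : ((n + 1 : ℕ) : ℕ∞) ≤ graphDist E x y := by
    apply le_sInf
    rintro d ⟨m, f, rfl, h0, hm, hw⟩
    by_cases hmn : m ≤ n
    · exact absurd hw (hc m hmn f h0 hm)
    · have : n + 1 ≤ m := by omega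
      exact_mod_cast this
  have : ((n + 1 : ℕ) : ℕ∞) ≤ (n : ℕ∞) := h2.trans h
  have : n + 1 ≤ n := by exact_mod_cast this
  omega

lemma walk_concat' {α : Type*} {E : Set (α × α)} {f g : ℕ → α} {n m : ℕ}
    (hf : IsWalk E f n) (hg : IsWalk E g m) (hjoin : f n = g 0) :
    IsWalk E (fun i => if i ≤ n then f i else g (i - n)) (n + m) := by
  intro i hi
  by_cases h1 : i + 1 ≤ n
  · simp only [show i ≤ n by omega, h1, if_pos]
    exact hf i (by omega)
  · by_cases h2 : i ≤ n
    · have hin : i = n := by omega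
      subst hin
      simp only [if_pos le_rfl, if_neg h1, show i + 1 - i = 0 + 1 by omega, hjoin]
      exact hg 0 (by omega)
    · simp only [if_neg h2, if_neg h1]
      rw [show i + 1 - n = (i - n) + 1 by omega]
      exact hg (i - n) (by omega)

lemma walk_reverse' {α : Type*} {E : Set (α × α)} (hsym : ∀ p ∈ E, (p.2, p.1) ∈ E)
    {f : ℕ → α} {n : ℕ} (hf : IsWalk E f n) : IsWalk E (fun i => f (n - i)) n := by
  intro i hi
  have := hsym _ (hf (n - i - 1) (by omega))
  simpa [show n - i - 1 + 1 = n - i by omega, show n - (i + 1) = n - i - 1 by omega] using this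

lemma dist_le_gdiam' {α : Type*} {E : Set (α × α)} {A : Set α} {x y : α}
    (hx : x ∈ A) (hy : y ∈ A) : graphDist E x y ≤ gdiam E A := by
  unfold gdiam
  exact le_trans (le_biSup _ hy) (le_biSup (fun x => ⨆ z ∈ A, graphDist E x z) hx)

/-- If a walk starts in `C` and ends outside, there is a crossing edge. -/
lemma walk_crossing' {α : Type*} {E : Set (α × α)} {C : Set α} {f : ℕ → α} {n : ℕ}
    (hw : IsWalk E f n) (h0 : f 0 ∈ C) (hn : f n ∉ C) :
    ∃ i < n, f i ∈ C ∧ f (i + 1) ∉ C := by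
  classical
  have hex : ∃ j, f j ∉ C := ⟨n, hn⟩
  set j := Nat.find hex with hjdef
  have hj1 : f j ∉ C := Nat.find_spec hex
  have hjn : j ≤ n := Nat.find_le hn
  have hj0 : j ≠ 0 := by
    intro h
    exact hj1 (h ▸ h0)
  refine ⟨j - 1, by omega, ?_, ?_⟩
  · by_contra hcon
    have hle : j ≤ j - 1 := Nat.find_le (h := hex) hcon
    omega
  · rwa [show j - 1 + 1 = j by omega]

lemma dist_le_add' {α : Type*} {E : Set (α × α)} {x y z : α} {a b : ℕ}
    (h1 : graphDist E x y ≤ (a : ℕ∞)) (h2 : graphDist E y z ≤ (b : ℕ∞)) :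
    graphDist E x z ≤ ((a + b : ℕ) : ℕ∞) := by
  obtain ⟨n, hn, f, hf0, hfn, hfw⟩ := exists_walk_of_dist_le' h1
  obtain ⟨m, hm, g, hg0, hgm, hgw⟩ := exists_walk_of_dist_le' h2
  have hcat := walk_concat' hfw hgw (hfn.trans hg0.symm)
  have hend : (fun i => if i ≤ n then f i else g (i - n)) (n + m) = z := by
    by_cases hm0 : m = 0
    · subst hm0
      simp only [Nat.add_zero, if_pos le_rfl]
      rw [hfn, ← hg0, hgm]
    · simp only [show ¬ n + m ≤ n by omega, if_neg, ite_false,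
        show n + m - n = m by omega, hgm]
  calc graphDist E x z ≤ ((n + m : ℕ) : ℕ∞) :=
        dist_le_of_walk' _ (by simp [hf0]) hend hcat
    _ ≤ ((a + b : ℕ) : ℕ∞) := by exact_mod_cast by omega

lemma dist_symm_le' {α : Type*} {E : Set (α × α)} (hsym : ∀ p ∈ E, (p.2, p.1) ∈ E)
    {x y : α} {n : ℕ} (h : graphDist E x y ≤ (n : ℕ∞)) : graphDist E y x ≤ (n : ℕ∞) := by
  obtain ⟨m, hm, f, hf0, hfm, hfw⟩ := exists_walk_of_dist_le' h
  calc graphDist E y x ≤ (m : ℕ∞) := by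
        apply dist_le_of_walk' (fun i => f (m - i)) (by simpa) (by simpa) (walk_reverse' hsym hfw)
    _ ≤ (n : ℕ∞) := by exact_mod_cast hm

/-- Pulling back a cutset with uniformly bounded boundaries along a
quasi-isometry `λ' : (Y,G') → (X,G)` yields a cutset `λ'⁻¹(𝒞)* = {λ'⁻¹(C)} ∩ Cut(G')`
of `G'` with uniformly bounded boundaries. -/
theorem preimage_cutset_bdd_boundaries {Y X : Type*}
    (G' : Set (Y × Y)) (G : Set (X × X)) (hG' : IsGraph G') (hG : IsGraph G)
    (hdeg' : BddDeg G') (hdeg : BddDeg G)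
    (lam : Y → X) (hqi : IsQI G' G lam)
    (𝒞 : Set (Set X)) (hcut : ∀ C ∈ 𝒞, IsCut G C)
    (r : ℕ) (hbdd : ∀ C ∈ 𝒞, gdiam G (innerB G C) ≤ (r : ℕ∞)) :
    (∀ D ∈ {D | ∃ C ∈ 𝒞, D = lam ⁻¹' C} ∩ {D | IsCut G' D}, IsCut G' D) ∧
    ∃ s : ℕ, ∀ D ∈ {D | ∃ C ∈ 𝒞, D = lam ⁻¹' C} ∩ {D | IsCut G' D},
      gdiam G' (innerB G' D) ≤ (s : ℕ∞) := by
  obtain ⟨⟨l, c, hl, hlc⟩, -⟩ := hqi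
  constructor
  · rintro D ⟨-, hD⟩
    exact hD
  refine ⟨l * (l + c + r + (l + c)) + c, ?_⟩
  rintro D ⟨⟨C, hC, rfl⟩, -⟩
  have key : ∀ x ∈ innerB G' (lam ⁻¹' C), ∃ b ∈ innerB G C,
      graphDist G (lam x) b ≤ ((l + c : ℕ) : ℕ∞) := by
    rintro x ⟨hxC, y, hyC, hxy⟩
    have hd1 : graphDist G' x y ≤ ((1 : ℕ) : ℕ∞) := by
      apply dist_le_of_walk' (fun j => if j = 0 then x else y) (by simp) (by simp)
      intro i hi
      interval_cases i
      simpa using hxy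
    have hd2 : graphDist G (lam x) (lam y) ≤ ((l + c : ℕ) : ℕ∞) := by
      calc graphDist G (lam x) (lam y) ≤ (l : ℕ∞) * graphDist G' x y + c := (hlc x y).1
        _ ≤ (l : ℕ∞) * ((1 : ℕ) : ℕ∞) + c := by gcongr
        _ = ((l + c : ℕ) : ℕ∞) := by push_cast; ring
    obtain ⟨m, hm, f, h0, hmend, hw⟩ := exists_walk_of_dist_le' hd2
    obtain ⟨i, hi, hfi, hfi1⟩ :=
      walk_crossing' hw (by rw [h0]; exact hxC) (by rw [hmend]; exact hyC)
    refine ⟨f i, ⟨hfi, f (i + 1), hfi1, hw i hi⟩, ?_⟩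
    calc graphDist G (lam x) (f i) ≤ (i : ℕ∞) :=
          dist_le_of_walk' f h0 rfl (fun j hj => hw j (by omega))
      _ ≤ ((l + c : ℕ) : ℕ∞) := by exact_mod_cast by omega
  refine iSup₂_le fun x hx => iSup₂_le fun x' hx' => ?_
  obtain ⟨b, hb, hdb⟩ := key x hx
  obtain ⟨b', hb', hdb'⟩ := key x' hx'
  have hmid : graphDist G b b' ≤ (r : ℕ∞) :=
    (dist_le_gdiam' hb hb').trans (hbdd C hC)
  have hback : graphDist G b' (lam x') ≤ ((l + c : ℕ) : ℕ∞) := dist_symm_le' hG.1 hdb'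
  have htot : graphDist G (lam x) (lam x') ≤ ((l + c + r + (l + c) : ℕ) : ℕ∞) :=
    dist_le_add' (dist_le_add' hdb hmid) hback
  calc graphDist G' x x' ≤ (l : ℕ∞) * graphDist G (lam x) (lam x') + c := (hlc x x').2
    _ ≤ (l : ℕ∞) * ((l + c + r + (l + c) : ℕ) : ℕ∞) + c := by gcongr
    _ = ((l * (l + c + r + (l + c)) + c : ℕ) : ℕ∞) := by push_cast; ring
end

section
/- Let (X,G) be a graph with uniformly bounded degrees, H ⊆ G a subgraph, and 𝒞 a cutset of G with uniformly bounded boundaries. Then every element of 𝒞|_H* := {C ∩ ω : C ∈ 𝒞, ω an E_H-class} ∩ Cut(H) is a cut of H, and the inner vertex boundaries (with respect to H) of the cuts in 𝒞|_H* have uniformly bounded d_G-diameter: sup { diam_G(∂iv^H C') : C' ∈ 𝒞|_H* } < ∞. -/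
open Set

lemma reach_extend {α : Type*} {E : Set (α × α)} {x y z : α}
    (h : Reach E x y) (he : (y, z) ∈ E) : Reach E x z := by
  obtain ⟨n, f, h0, hn, hw⟩ := h
  refine ⟨n + 1, fun i => if i ≤ n then f i else z, by simp [h0], by simp, ?_⟩
  intro i hi
  rcases lt_or_eq_of_le (Nat.lt_succ_iff.mp hi) with h' | h'
  · simpa [Nat.le_of_lt h', Nat.succ_le_of_lt h'] using hw i h'
  · subst h'; simpa [hn] using he

lemma gdiam_mono {α : Type*} (E : Set (α × α)) {A B : Set α} (h : A ⊆ B) :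
    gdiam E A ≤ gdiam E B := by
  refine iSup₂_le fun x hx => iSup₂_le fun y hy => ?_
  exact le_trans (le_iSup₂ (f := fun y _ => graphDist E x y) y (h hy))
    (le_iSup₂ (f := fun x _ => ⨆ y ∈ B, graphDist E x y) x (h hx))

/-- Restricting a cutset `𝒞` of `G` with uniformly bounded boundaries to a
subgraph `H ⊆ G` (intersecting cuts with `E_H`-classes and keeping those that are cuts of
`H`) yields cuts of `H` whose inner vertex boundaries have uniformly bounded
`d_G`-diameter. -/
theorem restricted_cutset_bdd_boundaries {X : Type*} (G H : Set (X × X))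
    (hG : IsGraph G) (hH : IsGraph H) (hsub : H ⊆ G) (hdeg : BddDeg G)
    (𝒞 : Set (Set X)) (hcut : ∀ C ∈ 𝒞, IsCut G C)
    (r : ℕ) (hbdd : ∀ C ∈ 𝒞, gdiam G (innerB G C) ≤ (r : ℕ∞)) :
    (∀ D ∈ {D | ∃ C ∈ 𝒞, ∃ x : X, D = C ∩ cls H x} ∩ {D | IsCut H D}, IsCut H D) ∧
    ∃ s : ℕ, ∀ D ∈ {D | ∃ C ∈ 𝒞, ∃ x : X, D = C ∩ cls H x} ∩ {D | IsCut H D},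
      gdiam G (innerB H D) ≤ (s : ℕ∞) := by
  refine ⟨fun D hD => hD.2, r, ?_⟩
  rintro D ⟨⟨C, hC, x₀, rfl⟩, -⟩
  refine le_trans (gdiam_mono G ?_) (hbdd C hC)
  rintro x ⟨⟨hxC, hxcls⟩, y, hyD, hxy⟩
  refine ⟨hxC, y, fun hyC => hyD ⟨hyC, reach_extend hxcls hxy⟩, hsub hxy⟩
end

section
/- Let (X,G) be a graph with G = H * K, where H and K are subgraphs of G (i.e., G = H ∪ K and E_H, E_K are freely intersecting). Let (Y,H') be a graph and γ : (X,H) → (Y,H') an injective quasi-isometry. Then E_{H'} and E_{(γ×γ)(K)} are freely intersecting, and γ : (X,G) → (Y, H' * (γ×γ)(K)) is also a quasi-isometry, where (γ×γ)(K) = {(γx, γy) : (x,y) ∈ K}. -/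
open Set

/-- The equivalence relations `E_{G₁}` and `E_{G₂}` are *freely intersecting*: alternating
nontrivial `E_{G₁}`/`E_{G₂}`-steps never return to the start. -/
def FreeProd {α : Type*} (E₁ E₂ : Set (α × α)) : Prop :=
  ∀ (n : ℕ) (x : ℕ → α), 1 ≤ n →
    (∀ i < n, Reach E₁ (x (2 * i)) (x (2 * i + 1)) ∧ x (2 * i) ≠ x (2 * i + 1)) →
    (∀ i < n, Reach E₂ (x (2 * i + 1)) (x (2 * i + 2)) ∧ x (2 * i + 1) ≠ x (2 * i + 2)) →
    x 0 ≠ x (2 * n)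

/-!
Quasi-isometry bounds are checked edge by edge. An `H`-edge moves a bounded `H'`-distance and a
`K`-edge goes to a single `(γ×γ)(K)`-edge, which bounds `d'(γx₁, γx₂)` by a multiple of
`d_G(x₁, x₂)`. Conversely, a walk in `H' ∪ (γ×γ)(K)` between points of `γ(X)` alternates
`H'`-stretches with `(γ×γ)(K)`-edges whose endpoints lie in `γ(X)`; each stretch pulls back to
an `H`-stretch of controlled length and each such edge to a `K`-edge. The same pullback turns
an alternating `E_{H'}`/`E_{(γ×γ)(K)}` cycle into an alternating `E_H`/`E_K` cycle, which
cannot exist.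
-/

open Function

section GraphDist

variable {α β : Type*} {E E' : Set (α × α)} {x y z : α}

lemma IsWalk.append {f g : ℕ → α} {n m : ℕ} (hf : IsWalk E f n) (hg : IsWalk E g m)
    (hfg : f n = g 0) : IsWalk E (fun i => if i ≤ n then f i else g (i - n)) (n + m) := by
  intro i hi
  rcases lt_trichotomy i n with h | rfl | h
  · simp only [h.le, Nat.succ_le_of_lt h, if_true]
    exact hf i h
  · simpa [hfg] using hg 0 (by omega)
  · have e : i + 1 - n = i - n + 1 := by omega
    simp only [show ¬ i ≤ n by omega, show ¬ i + 1 ≤ n by omega, if_false, e]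
    exact hg (i - n) (by omega)

lemma graphDist_le_of_isWalk {f : ℕ → α} {n : ℕ} (hw : IsWalk E f n) (h0 : f 0 = x)
    (hn : f n = y) : graphDist E x y ≤ n :=
  sInf_le ⟨n, f, rfl, h0, hn, hw⟩

lemma graphDist_self (E : Set (α × α)) (x : α) : graphDist E x x = 0 :=
  nonpos_iff_eq_zero.1 <|
    graphDist_le_of_isWalk (f := fun _ => x) (n := 0) (fun _ h => absurd h (Nat.not_lt_zero _))
      rfl rfl

lemma graphDist_le_one (h : (x, y) ∈ E) : graphDist E x y ≤ 1 := by
  have hw : IsWalk E (fun i => if i = 0 then x else y) 1 := fun i hi => by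
    obtain rfl : i = 0 := by omega
    simpa using h
  exact_mod_cast graphDist_le_of_isWalk hw rfl rfl

lemma graphDist_le_of_subset (h : E ⊆ E') : graphDist E' x y ≤ graphDist E x y :=
  sInf_le_sInf fun _ ⟨n, f, hd, h0, hn, hw⟩ => ⟨n, f, hd, h0, hn, fun i hi => h (hw i hi)⟩

lemma exists_isWalk_of_graphDist_ne_top (h : graphDist E x y ≠ ⊤) :
    ∃ (n : ℕ) (f : ℕ → α), graphDist E x y = n ∧ f 0 = x ∧ f n = y ∧ IsWalk E f n := by
  let walks := {d : ℕ∞ | ∃ (n : ℕ) (f : ℕ → α), d = n ∧ f 0 = x ∧ f n = y ∧ IsWalk E f n}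
  exact csInf_mem (s := walks) <|
    Set.nonempty_iff_ne_empty.2 fun he => h (show sInf walks = ⊤ by rw [he, sInf_empty])

lemma reach_iff_graphDist_ne_top : Reach E x y ↔ graphDist E x y ≠ ⊤ := by
  constructor
  · rintro ⟨n, f, h0, hn, hw⟩
    exact ne_top_of_le_ne_top (ENat.natCast_ne_top n) (graphDist_le_of_isWalk hw h0 hn)
  · intro h
    obtain ⟨n, f, -, h0, hn, hw⟩ := exists_isWalk_of_graphDist_ne_top h
    exact ⟨n, f, h0, hn, hw⟩

lemma graphDist_triangle (x y z : α) :
    graphDist E x z ≤ graphDist E x y + graphDist E y z := by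
  rcases eq_or_ne (graphDist E x y) ⊤ with h₁ | h₁
  · simp [h₁]
  rcases eq_or_ne (graphDist E y z) ⊤ with h₂ | h₂
  · simp [h₂]
  obtain ⟨n, f, hn, hf0, hfn, hf⟩ := exists_isWalk_of_graphDist_ne_top h₁
  obtain ⟨m, g, hm, hg0, hgm, hg⟩ := exists_isWalk_of_graphDist_ne_top h₂
  rw [hn, hm, ← Nat.cast_add]
  refine graphDist_le_of_isWalk (hf.append hg (hfn.trans hg0.symm)) (by simp [hf0]) ?_
  rcases Nat.eq_zero_or_pos m with rfl | hm0
  · simp [hfn, ← hg0, hgm]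
  · simp [show ¬ n + m ≤ n by omega, hgm]

lemma Reach.tail (h : Reach E x y) (he : (y, z) ∈ E) : Reach E x z := by
  rw [reach_iff_graphDist_ne_top] at h ⊢
  exact ne_top_of_le_ne_top
    (WithTop.add_ne_top.2 ⟨h, ne_top_of_le_ne_top ENat.one_ne_top (graphDist_le_one he)⟩)
    (graphDist_triangle x y z)

lemma Reach.of_graphDist_le {F : Set (β × β)} {x' y' : β} {l c : ℕ}
    (h : graphDist E x y ≤ l * graphDist F x' y' + c) (h' : Reach F x' y') : Reach E x y := by
  rw [reach_iff_graphDist_ne_top] at h' ⊢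
  exact ne_top_of_le_ne_top
    (WithTop.add_ne_top.2 ⟨WithTop.mul_ne_top (ENat.natCast_ne_top l) h', ENat.natCast_ne_top c⟩) h

lemma graphDist_map_le_mul {F : Set (β × β)} {φ : α → β} {L : ℕ} (hL : L ≠ 0)
    (hedge : ∀ p ∈ E, graphDist F (φ p.1) (φ p.2) ≤ L) (x y : α) :
    graphDist F (φ x) (φ y) ≤ L * graphDist E x y := by
  rcases eq_or_ne (graphDist E x y) ⊤ with h | h
  · simp [h, ENat.mul_top (Nat.cast_ne_zero.2 hL)]
  obtain ⟨n, f, hn, rfl, rfl, hw⟩ := exists_isWalk_of_graphDist_ne_top h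
  rw [hn]
  clear hn h
  induction n with
  | zero => simp [graphDist_self]
  | succ n ih =>
    calc graphDist F (φ (f 0)) (φ (f (n + 1)))
        ≤ graphDist F (φ (f 0)) (φ (f n)) + graphDist F (φ (f n)) (φ (f (n + 1))) :=
          graphDist_triangle _ _ _
      _ ≤ L * n + L := add_le_add (ih fun i hi => hw i (by omega)) (hedge _ (hw n n.lt_succ_self))
      _ = L * (n + 1 : ℕ) := by push_cast; ring

end GraphDist

section Image

variable {X Y : Type*} {γ : X → Y} {H K : Set (X × X)} {H' : Set (Y × Y)} {l c : ℕ}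

lemma reach_of_reach_image (hγ : Injective γ) {a b : X}
    (h : Reach (Prod.map γ γ '' K) (γ a) (γ b)) : Reach K a b := by
  obtain ⟨n, f, h0, hn, hw⟩ := h
  induction n generalizing b with
  | zero =>
    obtain rfl : a = b := hγ (h0.symm.trans hn)
    exact ⟨0, fun _ => a, rfl, rfl, fun _ h => absurd h (Nat.not_lt_zero _)⟩
  | succ n ih =>
    obtain ⟨⟨u, v⟩, huv, heq⟩ := hw n n.lt_succ_self
    simp only [Prod.map, Prod.mk.injEq] at heq
    obtain rfl : v = b := hγ (heq.2.trans hn)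
    exact (ih heq.1.symm fun i hi => hw i (by omega)).tail huv

lemma mem_range_of_reach_image {y y' : Y} (h : Reach (Prod.map γ γ '' K) y y') (hne : y ≠ y') :
    y ∈ range γ ∧ y' ∈ range γ := by
  obtain ⟨n, f, h0, hn, hw⟩ := h
  obtain ⟨m, rfl⟩ : ∃ m, n = m + 1 :=
    Nat.exists_eq_succ_of_ne_zero fun h => hne (by subst h; exact h0.symm.trans hn)
  obtain ⟨⟨u, _⟩, -, hu⟩ := hw 0 m.succ_pos
  obtain ⟨⟨_, v⟩, -, hv⟩ := hw m m.lt_succ_self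
  exact ⟨⟨u, h0 ▸ congrArg Prod.fst hu⟩, ⟨v, hn ▸ congrArg Prod.snd hv⟩⟩

lemma FreeProd.of_injective {E₁ E₂ : Set (X × X)} {F₁ F₂ : Set (Y × Y)}
    (hfree : FreeProd E₁ E₂) (hγ : Injective γ)
    (h₁ : ∀ a b, Reach F₁ (γ a) (γ b) → Reach E₁ a b)
    (h₂ : ∀ a b, Reach F₂ (γ a) (γ b) → Reach E₂ a b)
    (hrange : ∀ y y', Reach F₂ y y' → y ≠ y' → y ∈ range γ ∧ y' ∈ range γ) :
    FreeProd F₁ F₂ := by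
  intro n x hn hx₁ hx₂ hloop
  have hstep : ∀ i < n, x (2 * i + 1) ∈ range γ ∧ x (2 * i + 2) ∈ range γ :=
    fun i hi => hrange _ _ (hx₂ i hi).1 (hx₂ i hi).2
  have hx : ∀ j ≤ 2 * n, x j ∈ range γ := by
    intro j hj
    obtain ⟨i, rfl | rfl⟩ := Nat.even_or_odd' j
    · rcases Nat.eq_zero_or_pos i with rfl | hi
      · simpa [hloop, show 2 * n = 2 * (n - 1) + 2 by omega] using (hstep (n - 1) (by omega)).2
      · simpa [show 2 * (i - 1) + 2 = 2 * i by omega] using (hstep (i - 1) (by omega)).2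
    · exact (hstep i (by omega)).1
  have : Nonempty X := ⟨(hx 0 (Nat.zero_le _)).choose⟩
  have ha : ∀ j ≤ 2 * n, γ (invFun γ (x j)) = x j := fun j hj => invFun_eq (hx j hj)
  have hlift : ∀ {F : Set (Y × Y)} {E : Set (X × X)}, (∀ a b, Reach F (γ a) (γ b) → Reach E a b) →
      ∀ j j', j ≤ 2 * n → j' ≤ 2 * n → Reach F (x j) (x j') ∧ x j ≠ x j' →
        Reach E (invFun γ (x j)) (invFun γ (x j')) ∧ invFun γ (x j) ≠ invFun γ (x j') := by
    intro F E hF j j' hj hj' ⟨hr, hne⟩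
    rw [← ha j hj, ← ha j' hj'] at hr hne
    exact ⟨hF _ _ hr, fun h => hne (congrArg γ h)⟩
  refine hfree n (fun j => invFun γ (x j)) hn
    (fun i hi => hlift h₁ _ _ (by omega) (by omega) (hx₁ i hi))
    (fun i hi => hlift h₂ _ _ (by omega) (by omega) (hx₂ i hi)) (hγ ?_)
  rw [ha 0 (Nat.zero_le _), ha (2 * n) le_rfl, hloop]

-- `γ w` is where the walk last left a `(γ×γ)(K)`-edge; each such edge costs at most `l s + c + 1`,
-- which `l + c + 1` per step of the walk pays for.
lemma exists_graphDist_le_of_isWalk_union_image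
    (hdist : ∀ x₁ x₂, graphDist H x₁ x₂ ≤ l * graphDist H' (γ x₁) (γ x₂) + c)
    {f : ℕ → Y} {m : ℕ} (hw : IsWalk (H' ∪ Prod.map γ γ '' K) f m) {u : X} (h0 : f 0 = γ u) :
    ∃ w s t, s + t = m ∧ graphDist (H ∪ K) u w ≤ ((l + c + 1) * t : ℕ) ∧
      graphDist H' (γ w) (f m) ≤ s := by
  induction m with
  | zero => exact ⟨u, 0, 0, rfl, by simp [graphDist_self], by simp [h0, graphDist_self]⟩
  | succ m ih =>
    obtain ⟨w, s, t, hst, hu, hs⟩ := ih fun i hi => hw i (by omega)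
    rcases hw m m.lt_succ_self with hH' | ⟨⟨p, q⟩, hpq, hpq_eq⟩
    · refine ⟨w, s + 1, t, by omega, hu, ?_⟩
      calc graphDist H' (γ w) (f (m + 1))
          ≤ graphDist H' (γ w) (f m) + graphDist H' (f m) (f (m + 1)) := graphDist_triangle _ _ _
        _ ≤ s + 1 := add_le_add hs (graphDist_le_one hH')
        _ = (s + 1 : ℕ) := by push_cast; rfl
    · simp only [Prod.map, Prod.mk.injEq] at hpq_eq
      obtain ⟨hp, hq⟩ := hpq_eq
      refine ⟨q, 0, s + t + 1, by omega, ?_, by simp [hq, graphDist_self]⟩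
      have hwp : graphDist (H ∪ K) w p ≤ l * s + c := calc
        graphDist (H ∪ K) w p ≤ graphDist H w p := graphDist_le_of_subset subset_union_left
        _ ≤ l * graphDist H' (γ w) (γ p) + c := hdist w p
        _ ≤ l * s + c := by rw [hp]; gcongr
      calc graphDist (H ∪ K) u q
          ≤ graphDist (H ∪ K) u w + (graphDist (H ∪ K) w p + graphDist (H ∪ K) p q) :=
            (graphDist_triangle _ w _).trans (add_le_add_right (graphDist_triangle _ _ _) _)
        _ ≤ ((l + c + 1) * t : ℕ) + ((l * s + c) + 1) :=
            add_le_add hu (add_le_add hwp (graphDist_le_one (Or.inr hpq)))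
        _ ≤ ((l + c + 1) * (s + t + 1) : ℕ) := by norm_cast; nlinarith

lemma graphDist_union_le_of_graphDist_le
    (hdist : ∀ x₁ x₂, graphDist H x₁ x₂ ≤ l * graphDist H' (γ x₁) (γ x₂) + c) (x₁ x₂ : X) :
    graphDist (H ∪ K) x₁ x₂ ≤
      (l + c + 1 : ℕ) * graphDist (H' ∪ Prod.map γ γ '' K) (γ x₁) (γ x₂) + c := by
  rcases eq_or_ne (graphDist (H' ∪ Prod.map γ γ '' K) (γ x₁) (γ x₂)) ⊤ with h | h
  · simp [h, ENat.mul_top]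
  obtain ⟨m, f, hm, h0, hf, hw⟩ := exists_isWalk_of_graphDist_ne_top h
  obtain ⟨w, s, t, rfl, hu, hs⟩ := exists_graphDist_le_of_isWalk_union_image hdist hw h0
  rw [hf] at hs
  calc graphDist (H ∪ K) x₁ x₂ ≤ graphDist (H ∪ K) x₁ w + graphDist H w x₂ :=
        (graphDist_triangle _ w _).trans
          (add_le_add_right (graphDist_le_of_subset subset_union_left) _)
    _ ≤ ((l + c + 1) * t : ℕ) + (l * s + c) := add_le_add hu ((hdist w x₂).trans (by gcongr))
    _ ≤ (l + c + 1 : ℕ) * (s + t : ℕ) + c := by norm_cast; nlinarith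
    _ = _ := by rw [hm]

lemma graphDist_image_union_le_of_graphDist_le
    (hdist : ∀ x₁ x₂, graphDist H' (γ x₁) (γ x₂) ≤ l * graphDist H x₁ x₂ + c) (x₁ x₂ : X) :
    graphDist (H' ∪ Prod.map γ γ '' K) (γ x₁) (γ x₂) ≤
      (l + c + 1 : ℕ) * graphDist (H ∪ K) x₁ x₂ + c := by
  refine le_add_right (graphDist_map_le_mul (Nat.succ_ne_zero _) (fun p hp => ?_) x₁ x₂)
  rcases hp with hp | hp
  · calc _ ≤ graphDist H' (γ p.1) (γ p.2) := graphDist_le_of_subset subset_union_left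
      _ ≤ l * graphDist H p.1 p.2 + c := hdist _ _
      _ ≤ l * 1 + c := by gcongr; exact graphDist_le_one hp
      _ ≤ (l + c + 1 : ℕ) := by norm_cast; omega
  · exact (graphDist_le_one (Or.inr (mem_image_of_mem _ hp))).trans (by norm_cast; omega)

end Image

theorem free_product_transfer_general {X Y : Type*} (G H K : Set (X × X)) (H' : Set (Y × Y))
    (hG : G = H ∪ K) (hfree : FreeProd H K)
    (γ : X → Y) (hinj : Function.Injective γ) (hqi : IsQI H H' γ) :
    FreeProd H' (Prod.map γ γ '' K) ∧
    IsQI G (H' ∪ Prod.map γ γ '' K) γ := by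
  obtain ⟨⟨l, c, -, hlip⟩, k, hdense⟩ := hqi
  subst hG
  refine ⟨hfree.of_injective hinj (fun a b => Reach.of_graphDist_le (hlip a b).2)
      (fun _ _ => reach_of_reach_image hinj) (fun _ _ => mem_range_of_reach_image),
    ⟨l + c + 1, c, by omega, fun x₁ x₂ => ⟨?_, ?_⟩⟩, k, fun y => ?_⟩
  · exact graphDist_image_union_le_of_graphDist_le (fun a b => (hlip a b).1) x₁ x₂
  · exact graphDist_union_le_of_graphDist_le (fun a b => (hlip a b).2) x₁ x₂
  · obtain ⟨x, hx⟩ := hdense y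
    exact ⟨x, (graphDist_le_of_subset subset_union_left).trans hx⟩

/-- If `G = H * K` (i.e. `G = H ∪ K` with `E_H`, `E_K` freely intersecting)
and `γ : (X,H) → (Y,H')` is an injective quasi-isometry, then `E_{H'}` and
`E_{(γ×γ)(K)}` are freely intersecting and `γ : (X,G) → (Y, H' ∪ (γ×γ)(K))` is a
quasi-isometry. -/
theorem free_product_transfer {X Y : Type*} (G H K : Set (X × X)) (H' : Set (Y × Y))
    (hH : IsGraph H) (hK : IsGraph K) (hH' : IsGraph H')
    (hG : G = H ∪ K) (hfree : FreeProd H K)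
    (γ : X → Y) (hinj : Function.Injective γ) (hqi : IsQI H H' γ) :
    FreeProd H' (Prod.map γ γ '' K) ∧
    IsQI G (H' ∪ Prod.map γ γ '' K) γ :=
  free_product_transfer_general G H K H' hG hfree γ hinj hqi
end

section
/- Let (X,G) be a graph with G = T * H, where T and H are subgraphs of G (G = T ∪ H, E_T and E_H freely intersecting) and T is acyclic. Then for every edge t = (x,y) ∈ T there exists a unique cut C of G such that ∂oe C = {t}, i.e., (x,y) is the only ordered pair in (C × C̄) ∩ G. -/
open Set

section Helpers

variable {α : Type*}

lemma reach_refl (E : Set (α × α)) (x : α) : Reach E x x :=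
  ⟨0, fun _ => x, rfl, rfl, fun i h => absurd h (Nat.not_lt_zero i)⟩

lemma reach_edge {E : Set (α × α)} {x y : α} (h : (x, y) ∈ E) : Reach E x y := by
  refine ⟨1, fun k => if k = 0 then x else y, by simp, by simp, ?_⟩
  intro i hi
  interval_cases i
  simpa using h

lemma reach_trans {E : Set (α × α)} {x y z : α} (h1 : Reach E x y) (h2 : Reach E y z) :
    Reach E x z := by
  obtain ⟨n, f, hf0, hfn, hf⟩ := h1
  obtain ⟨m, g, hg0, hgm, hg⟩ := h2
  refine ⟨n + m, fun k => if k ≤ n then f k else g (k - n), by simp [hf0], ?_, ?_⟩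
  · rcases Nat.eq_zero_or_pos m with hm | hm
    · subst hm
      simpa using hfn.trans (hg0.symm.trans hgm)
    · have h1 : ¬ (n + m ≤ n) := by omega
      have h2 : n + m - n = m := by omega
      simp [h1, h2, hgm]
  · intro i hi
    by_cases hin : i + 1 ≤ n
    · have : i ≤ n := by omega
      simpa [this, hin] using hf i (by omega)
    · by_cases hin2 : i ≤ n
      · have hieq : i = n := by omega
        subst hieq
        have h2 : i + 1 - i = 1 := by omega
        simpa [hin, h2, hfn, ← hg0] using hg 0 (by omega)
      · have h3 : i + 1 - n = (i - n) + 1 := by omega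
        simpa [hin, hin2, h3] using hg (i - n) (by omega)

lemma reach_symm {E : Set (α × α)} (hE : ∀ p ∈ E, (p.2, p.1) ∈ E) {x y : α}
    (h : Reach E x y) : Reach E y x := by
  obtain ⟨n, f, hf0, hfn, hf⟩ := h
  refine ⟨n, fun k => f (n - k), by simp [hfn], by simp [hf0], ?_⟩
  intro i hi
  have h1 : n - i = (n - (i + 1)) + 1 := by omega
  have := hE _ (hf (n - (i + 1)) (by omega))
  simpa [h1] using this

lemma reach_mono {E E' : Set (α × α)} (h : E ⊆ E') {x y : α} (hr : Reach E x y) :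
    Reach E' x y := by
  obtain ⟨n, f, hf0, hfn, hf⟩ := hr
  exact ⟨n, f, hf0, hfn, fun i hi => h (hf i hi)⟩

lemma reach_ind {E : Set (α × α)} (P : α → Prop)
    (hstep : ∀ a b, P a → (a, b) ∈ E → P b) {x y : α} (h : Reach E x y) (hx : P x) : P y := by
  obtain ⟨n, f, hf0, hfn, hf⟩ := h
  subst hf0 hfn
  have : ∀ k ≤ n, P (f k) := by
    intro k hk
    induction k with
    | zero => exact hx
    | succ j ih => exact hstep _ _ (ih (by omega)) (hf j (by omega))
  exact this n le_rfl

end Helpers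
section Chains

variable {α : Type*}

/-- An alternating nontrivial chain of `R`-steps, typed by booleans. -/
def AChain (R : Bool → α → α → Prop) (m : ℕ) (z : ℕ → α) (s : ℕ → Bool) : Prop :=
  (∀ i < m, R (s i) (z i) (z (i + 1)) ∧ z i ≠ z (i + 1)) ∧
    ∀ i, i + 1 < m → s i ≠ s (i + 1)

lemma achain_mono {R R' : Bool → α → α → Prop} (h : ∀ b a c, R b a c → R' b a c)
    {m z s} (hc : AChain R m z s) : AChain R' m z s :=
  ⟨fun i hi => ⟨h _ _ _ (hc.1 i hi).1, (hc.1 i hi).2⟩, hc.2⟩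

lemma achain_prepend {R : Bool → α → α → Prop} (hR : ∀ b, Transitive (R b))
    {m : ℕ} {z : ℕ → α} {s : ℕ → Bool} (h : AChain R m z s) (b : Bool) (a : α)
    (hab : R b a (z 0)) :
    ∃ m' z' s', AChain R m' z' s' ∧ z' 0 = a ∧ z' m' = z m := by
  obtain ⟨hstep, halt⟩ := h
  by_cases hac : a = z 0
  · exact ⟨m, z, s, ⟨hstep, halt⟩, hac.symm, rfl⟩
  rcases Nat.eq_zero_or_pos m with hm | hm
  · subst hm
    refine ⟨1, fun k => if k = 0 then a else z 0, fun _ => b, ⟨?_, ?_⟩, by simp, by simp⟩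
    · intro i hi
      interval_cases i
      simpa using ⟨hab, hac⟩
    · intro i hi; omega
  by_cases hsb : s 0 = b
  · have hmerge : R b a (z 1) := hR b hab (hsb ▸ (hstep 0 hm).1)
    by_cases haz : a = z 1
    · refine ⟨m - 1, fun k => z (k + 1), fun k => s (k + 1), ⟨?_, ?_⟩, haz.symm, ?_⟩
      · intro i hi; exact hstep (i + 1) (by omega)
      · intro i hi; exact halt (i + 1) (by omega)
      · show z (m - 1 + 1) = z m
        congr 1
        omega
    · refine ⟨m, fun k => if k = 0 then a else z k, s, ⟨?_, halt⟩, by simp, ?_⟩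
      · intro i hi
        rcases Nat.eq_zero_or_pos i with hi0 | hi0
        · subst hi0
          simpa using ⟨hsb ▸ hmerge, haz⟩
        · have h1 : i ≠ 0 := by omega
          have h2 : i + 1 ≠ 0 := by omega
          simpa [h1, h2] using hstep i hi
      · have : m ≠ 0 := by omega
        simp [this]
  · refine ⟨m + 1, fun k => if k = 0 then a else z (k - 1),
      fun k => if k = 0 then b else s (k - 1), ⟨?_, ?_⟩, by simp, by simp⟩
    · intro i hi
      rcases Nat.eq_zero_or_pos i with hi0 | hi0
      · subst hi0
        simpa using ⟨hab, hac⟩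
      · have h1 : i ≠ 0 := by omega
        have h2 : i + 1 ≠ 0 := by omega
        have h3 : i + 1 - 1 = (i - 1) + 1 := by omega
        simpa [h1, h2, h3] using hstep (i - 1) (by omega)
    · intro i hi
      rcases Nat.eq_zero_or_pos i with hi0 | hi0
      · subst hi0
        simpa using fun h => hsb h.symm
      · have h1 : i ≠ 0 := by omega
        have h2 : i + 1 ≠ 0 := by omega
        have h3 : i + 1 - 1 = (i - 1) + 1 := by omega
        simpa [h1, h2, h3] using halt (i - 1) (by omega)

lemma walk_to_chain {R : Bool → α → α → Prop} (hR : ∀ b, Transitive (R b))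
    {E : Set (α × α)} (hE : ∀ p ∈ E, ∃ b, R b p.1 p.2) {x y : α} (h : Reach E x y) :
    ∃ m z s, AChain R m z s ∧ z 0 = x ∧ z m = y := by
  obtain ⟨n, f, hf0, hfn, hf⟩ := h
  subst hf0 hfn
  have key : ∀ k ≤ n, ∃ m z s, AChain R m z s ∧ z 0 = f (n - k) ∧ z m = f n := by
    intro k hk
    induction k with
    | zero =>
      exact ⟨0, fun _ => f n, fun _ => true,
        ⟨fun i hi => absurd hi (Nat.not_lt_zero i), fun i hi => absurd hi (by omega)⟩,
        by simp, rfl⟩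
    | succ j ih =>
      obtain ⟨m, z, s, hc, hz0, hzm⟩ := ih (by omega)
      have hedge : (f (n - (j + 1)), f (n - j)) ∈ E := by
        have h1 : n - j = (n - (j + 1)) + 1 := by omega
        rw [h1]
        exact hf (n - (j + 1)) (by omega)
      obtain ⟨b, hb⟩ := hE _ hedge
      obtain ⟨m', z', s', hc', h0', hm'⟩ := achain_prepend hR hc b _ (hz0 ▸ hb)
      exact ⟨m', z', s', hc', h0', hm'.trans hzm⟩
  simpa using key n le_rfl

end Chains
section Cyc

variable {α : Type*}

lemma cyc_false {R : Bool → α → α → Prop} (hR : ∀ b, Transitive (R b))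
    (hfp : ∀ (n : ℕ) (zz : ℕ → α), 1 ≤ n →
      (∀ i < n, R true (zz (2 * i)) (zz (2 * i + 1)) ∧ zz (2 * i) ≠ zz (2 * i + 1)) →
      (∀ i < n, R false (zz (2 * i + 1)) (zz (2 * i + 2)) ∧ zz (2 * i + 1) ≠ zz (2 * i + 2)) →
      zz 0 ≠ zz (2 * n)) :
    ∀ m, 1 ≤ m → ∀ (z : ℕ → α) (s : ℕ → Bool), AChain R m z s → z m = z 0 → False := by
  intro m
  induction m using Nat.strong_induction_on with
  | _ m ih =>
    intro hm z s hc hclose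
    obtain ⟨hstep, halt⟩ := hc
    rcases Nat.lt_or_ge m 2 with hm2 | hm2
    · have hm1 : m = 1 := by omega
      subst hm1
      exact (hstep 0 (by omega)).2 hclose.symm
    have hs : ∀ i < m, s i = if i % 2 = 0 then s 0 else !(s 0) := by
      intro i hi
      induction i with
      | zero => simp
      | succ k ihk =>
        have hk := ihk (by omega)
        have hne := halt k (by omega)
        by_cases hke : k % 2 = 0
        · have h1 : ¬ ((k + 1) % 2 = 0) := by omega
          rw [if_pos hke] at hk
          rw [if_neg h1]
          have hne2 : s (k + 1) ≠ s 0 := fun h => hne (hk.trans h.symm)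
          revert hne2
          cases s (k + 1) <;> cases s 0 <;> decide
        · have h1 : (k + 1) % 2 = 0 := by omega
          rw [if_neg hke] at hk
          rw [if_pos h1]
          have hne2 : s (k + 1) ≠ !(s 0) := fun h => hne (hk.trans h.symm)
          revert hne2
          cases s (k + 1) <;> cases s 0 <;> decide
    by_cases hend : s (m - 1) = s 0
    · -- equal types at the cyclic junction: merge the two steps
      have hm3 : 3 ≤ m := by
        rcases Nat.lt_or_ge m 3 with h | h
        · exfalso
          have hm2' : m = 2 := by omega
          subst hm2'
          exact halt 0 (by omega) (by simpa using hend.symm)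
        · exact h
      have hstep0 := hstep 0 (by omega)
      have hstepl := hstep (m - 1) (by omega)
      rw [show m - 1 + 1 = m from by omega, hclose, hend] at hstepl
      have hmerge : R (s 0) (z (m - 1)) (z 1) := hR _ hstepl.1 hstep0.1
      by_cases hzz : z (m - 1) = z 1
      · refine ih (m - 2) (by omega) (by omega) (fun k => z (k + 1)) (fun k => s (k + 1))
          ⟨?_, ?_⟩ ?_
        · intro i hi; exact hstep (i + 1) (by omega)
        · intro i hi; exact halt (i + 1) (by omega)
        · show z (m - 2 + 1) = z (0 + 1)
          rw [show m - 2 + 1 = m - 1 from by omega]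
          exact hzz
      · refine ih (m - 1) (by omega) (by omega)
          (fun k => if k = m - 1 then z 1 else z (k + 1))
          (fun k => if k = m - 2 then s 0 else s (k + 1)) ⟨?_, ?_⟩ ?_
        · intro i hi
          by_cases him : i = m - 2
          · subst him
            have e1 : ¬ (m - 2 = m - 1) := by omega
            have e2 : m - 2 + 1 = m - 1 := by omega
            simp only [e2, if_neg e1, if_pos rfl]
            exact ⟨hmerge, hzz⟩
          · have e1 : ¬ (i = m - 1) := by omega
            have e2 : ¬ (i + 1 = m - 1) := by omega
            simp only [if_neg e1, if_neg e2, if_neg him]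
            exact hstep (i + 1) (by omega)
        · intro i hi
          by_cases him : i + 1 = m - 2
          · have e1 : ¬ (i = m - 2) := by omega
            simp only [if_neg e1, if_pos him]
            rw [him]
            have h4 := halt (m - 2) (by omega)
            rw [show m - 2 + 1 = m - 1 from by omega, hend] at h4
            exact h4
          · have e1 : ¬ (i = m - 2) := by omega
            simp only [if_neg e1, if_neg him]
            exact halt (i + 1) (by omega)
        · have e1 : ¬ ((0 : ℕ) = m - 1) := by omega
          simp [if_neg e1]
    · -- fully alternating cycle: contradict the free product property
      have hpar : ¬ ((m - 1) % 2 = 0) := by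
        intro h
        exact hend (by rw [hs (m - 1) (by omega), if_pos h])
      obtain ⟨n, hmn, hn1⟩ : ∃ n, m = 2 * n ∧ 1 ≤ n := ⟨m / 2, by omega, by omega⟩
      have hcl : z (2 * n) = z 0 := by rw [← hmn]; exact hclose
      by_cases hb0 : s 0 = true
      · refine hfp n z hn1 ?_ ?_ (by rw [hcl])
        · intro i hi
          have h1 := hstep (2 * i) (by omega)
          rw [hs (2 * i) (by omega), if_pos (by omega), hb0] at h1
          exact h1
        · intro i hi
          have h1 := hstep (2 * i + 1) (by omega)
          rw [hs (2 * i + 1) (by omega), if_neg (by omega), hb0] at h1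
          exact h1
      · have hb0' : s 0 = false := by revert hb0; cases s 0 <;> simp
        refine hfp n (fun k => if k = 2 * n then z 1 else z (k + 1)) hn1 ?_ ?_ ?_
        · intro i hi
          simp only [if_neg (show ¬ (2 * i = 2 * n) from by omega),
            if_neg (show ¬ (2 * i + 1 = 2 * n) from by omega)]
          have h1 := hstep (2 * i + 1) (by omega)
          rw [hs (2 * i + 1) (by omega), if_neg (by omega), hb0'] at h1
          exact h1
        · intro i hi
          simp only [if_neg (show ¬ (2 * i + 1 = 2 * n) from by omega)]
          by_cases hi2 : 2 * i + 1 + 1 = 2 * n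
          · simp only [if_pos hi2, hi2, hcl]
            have h1 := hstep 0 (by omega)
            rw [hb0'] at h1
            exact h1
          · simp only [if_neg hi2]
            have h1 := hstep (2 * i + 1 + 1) (by omega)
            rw [hs (2 * i + 1 + 1) (by omega), if_pos (by omega), hb0'] at h1
            exact h1
        · simp [if_neg (show ¬ ((0 : ℕ) = 2 * n) from by omega)]

end Cyc
section Tree

variable {α : Type*}

lemma exists_inj_walk {E : Set (α × α)} {x y : α} (h : Reach E x y) :
    ∃ n f, f 0 = x ∧ f n = y ∧ IsWalk E f n ∧
      ∀ i j, i ≤ n → j ≤ n → f i = f j → i = j := by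
  classical
  have hex : ∃ n, ∃ f : ℕ → α, f 0 = x ∧ f n = y ∧ IsWalk E f n := h
  obtain ⟨f, hf0, hfn, hf⟩ := Nat.find_spec hex
  set n := Nat.find hex with hn
  refine ⟨n, f, hf0, hfn, hf, ?_⟩
  by_contra hcon
  push_neg at hcon
  obtain ⟨i, j, hi, hj, hij, hne⟩ := hcon
  -- wlog i < j
  wlog hlt : i < j generalizing i j
  · exact this j i hj hi hij.symm (Ne.symm hne) (by omega)
  have hd1 : 1 ≤ j - i := by omega
  refine Nat.find_min hex (m := n - (j - i)) (by omega) ⟨fun k => if k < i then f k else f (k + (j - i)), ?_, ?_, ?_⟩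
  · by_cases h0 : 0 < i
    · simp [h0, hf0]
    · have hi0 : i = 0 := by omega
      have : ¬ (0 < i) := by omega
      simp only [if_neg this]
      rw [show 0 + (j - i) = j from by omega, ← hij, hi0, hf0]
  · have h1 : ¬ (n - (j - i) < i) := by omega
    simp only [if_neg h1]
    rw [show n - (j - i) + (j - i) = n from by omega, hfn]
  · intro k hk
    by_cases h1 : k + 1 < i
    · have h2 : k < i := by omega
      simp only [if_pos h1, if_pos h2]
      exact hf k (by omega)
    · by_cases h2 : k < i
      · have h3 : k + 1 = i := by omega
        simp only [if_pos h2, if_neg h1]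
        rw [show k + 1 + (j - i) = j from by omega, ← hij, ← h3]
        exact hf k (by omega)
      · have h4 : ¬ (k + 1 < i) := h1
        simp only [if_neg h2, if_neg h4]
        rw [show k + 1 + (j - i) = (k + (j - i)) + 1 from by omega]
        exact hf (k + (j - i)) (by omega)

lemma tree_no_detour {T : Set (α × α)} (hT : IsGraph T) (hacyc : Acyclic T) {x y : α}
    (hxy : (x, y) ∈ T)
    (hr : Reach {p ∈ T | p ≠ (x, y) ∧ p ≠ (y, x)} x y) : False := by
  have hne : x ≠ y := fun h => hT.2 x (h ▸ hxy)
  obtain ⟨n, f, hf0, hfn, hf, hinj⟩ := exists_inj_walk hr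
  have hn1 : n ≠ 0 := fun h => hne (by rw [← hf0, ← hfn, h])
  have hn2 : n ≠ 1 := by
    intro h
    have h2 := hf 0 (by omega)
    rw [hf0] at h2
    rw [h] at hfn
    rw [hfn] at h2
    exact h2.2.1 rfl
  apply hacyc
  refine ⟨fun k => if k ≤ n then f k else x, n + 1, by omega, ?_, ?_, ?_⟩
  · intro i hi
    by_cases hin : i + 1 ≤ n
    · have h1 : i ≤ n := by omega
      simp only [if_pos h1, if_pos hin]
      exact (hf i (by omega)).1
    · have hieq : i = n := by omega
      subst hieq
      simp only [if_pos le_rfl, if_neg hin]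
      rw [hfn]
      exact hT.1 _ hxy
  · have h1 : ¬ (n + 1 ≤ n) := by omega
    simp only [if_neg h1, if_pos (Nat.zero_le n), hf0]
  · intro i j hi hj hij
    have h1 : i ≤ n := by omega
    have h2 : j ≤ n := by omega
    simp only [if_pos h1, if_pos h2] at hij
    exact hinj i j h1 h2 hij

end Tree
section Key

variable {X : Type*}

lemma key_no_reach {G T H : Set (X × X)} (hT : IsGraph T) (hH : IsGraph H)
    (hG : G = T ∪ H) (hfree : FreeProd T H) (hacyc : Acyclic T) {x y : X}
    (hxy : (x, y) ∈ T) :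
    ¬ Reach {p ∈ G | p ≠ (x, y) ∧ p ≠ (y, x)} x y := by
  intro hreach
  have hne : x ≠ y := fun h => hT.2 x (h ▸ hxy)
  have hyx : (y, x) ∈ T := hT.1 _ hxy
  -- neither (x,y) nor (y,x) can be in H
  have hHyx : ¬ Reach H y x := by
    intro hr2
    refine hfree 1 (fun k => if k = 1 then y else x) le_rfl ?_ ?_ (by simp)
    · intro i hi
      interval_cases i
      simpa using ⟨reach_edge hxy, hne⟩
    · intro i hi
      interval_cases i
      simpa using ⟨hr2, fun h => hne h.symm⟩
  set T' : Set (X × X) := {p ∈ T | p ≠ (x, y) ∧ p ≠ (y, x)} with hT'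
  set R' : Bool → X → X → Prop :=
    fun b a c => cond b (Reach T' a c) (Reach H a c) with hR'
  set R : Bool → X → X → Prop :=
    fun b a c => cond b (Reach T a c) (Reach H a c) with hRdef
  have hR'trans : ∀ b, Transitive (R' b) := by
    intro b
    cases b <;> exact fun a c d h1 h2 => reach_trans h1 h2
  have hRtrans : ∀ b, Transitive (R b) := by
    intro b
    cases b <;> exact fun a c d h1 h2 => reach_trans h1 h2
  have hE : ∀ p ∈ {p ∈ G | p ≠ (x, y) ∧ p ≠ (y, x)}, ∃ b, R' b p.1 p.2 := by
    rintro ⟨a, c⟩ ⟨hpG, h1, h2⟩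
    rw [hG] at hpG
    rcases hpG with hp | hp
    · exact ⟨true, reach_edge (⟨hp, h1, h2⟩ : (a, c) ∈ T')⟩
    · exact ⟨false, reach_edge hp⟩
  obtain ⟨m, z, s, hc, hz0, hzm⟩ := walk_to_chain hR'trans hE hreach
  have hweak : AChain R m z s := by
    refine achain_mono ?_ hc
    intro b a c hb
    cases b
    · exact hb
    · exact reach_mono (sep_subset _ _) hb
  have hfp : ∀ (n : ℕ) (zz : ℕ → X), 1 ≤ n →
      (∀ i < n, R true (zz (2 * i)) (zz (2 * i + 1)) ∧ zz (2 * i) ≠ zz (2 * i + 1)) →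
      (∀ i < n, R false (zz (2 * i + 1)) (zz (2 * i + 2)) ∧ zz (2 * i + 1) ≠ zz (2 * i + 2)) →
      zz 0 ≠ zz (2 * n) := fun n zz hn h1 h2 => hfree n zz hn h1 h2
  rcases Nat.eq_zero_or_pos m with hm0 | hm
  · subst hm0
    exact hne (hz0 ▸ hzm ▸ rfl)
  cases hlast : s (m - 1) with
  | false =>
    refine cyc_false hRtrans hfp (m + 1) (by omega)
      (fun k => if k = m + 1 then x else z k) (fun k => if k = m then true else s k)
      ⟨?_, ?_⟩ ?_
    · intro i hi
      by_cases him : i = m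
      · have e1 : ¬ (i = m + 1) := by omega
        have e2 : i + 1 = m + 1 := by omega
        simp only [if_neg e1, e2, if_pos rfl, if_pos him]
        rw [him, hzm]
        exact ⟨reach_edge hyx, fun h => hne h.symm⟩
      · simp only [if_neg him, if_neg (show ¬ (i = m + 1) from by omega),
          if_neg (show ¬ (i + 1 = m + 1) from fun h => him (by omega))]
        exact hweak.1 i (by omega)
    · intro i hi
      by_cases him : i + 1 = m
      · have e1 : ¬ (i = m) := by omega
        simp only [if_neg e1, if_pos him]
        rw [show i = m - 1 from by omega, hlast]
        simp
      · have e1 : ¬ (i = m) := by omega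
        simp only [if_neg e1, if_neg him]
        exact hweak.2 i (by omega)
    · simp [if_neg (show ¬ ((0 : ℕ) = m + 1) from by omega), hz0]
  | true =>
    have hTlast : Reach T' (z (m - 1)) (z m) := by
      have h1 := (hc.1 (m - 1) (by omega)).1
      rw [hlast] at h1
      rw [show m - 1 + 1 = m from by omega] at h1
      exact h1
    rcases Nat.lt_or_ge m 2 with hm2 | hm2
    · have hm1 : m = 1 := by omega
      rw [hm1] at hzm
      rw [hm1, hz0, hzm] at hTlast
      exact tree_no_detour hT hacyc hxy hTlast
    · by_cases hzx : z (m - 1) = x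
      · refine cyc_false hRtrans hfp (m - 1) (by omega) z s ⟨?_, ?_⟩ ?_
        · intro i hi
          exact hweak.1 i (by omega)
        · intro i hi
          exact hweak.2 i (by omega)
        · rw [hzx, hz0]
      · refine cyc_false hRtrans hfp m (by omega)
          (fun k => if k = m then x else z k) s ⟨?_, ?_⟩ ?_
        · intro i hi
          by_cases him : i = m - 1
          · subst him
            simp only [if_neg (show ¬ (m - 1 = m) from by omega),
              if_pos (show m - 1 + 1 = m from by omega)]
            rw [hlast]
            constructor
            · show Reach T (z (m - 1)) x
              refine reach_trans (reach_mono (sep_subset _ _) hTlast) ?_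
              rw [hzm]
              exact reach_edge hyx
            · exact hzx
          · simp only [if_neg (show ¬ (i = m) from by omega),
              if_neg (show ¬ (i + 1 = m) from by omega)]
            exact hweak.1 i hi
        · exact hweak.2
        · simp [if_neg (show ¬ ((0 : ℕ) = m) from by omega), hz0]

end Key
/-- If `G = T * H` with `T` acyclic, then for every edge `t = (x,y) ∈ T`
there is a unique cut `C` of `G` whose outer edge boundary is exactly `{t}`. -/
theorem unique_cut_for_tree_edge {X : Type*} (G T H : Set (X × X))
    (hT : IsGraph T) (hH : IsGraph H) (hG : G = T ∪ H)
    (hfree : FreeProd T H) (hacyc : Acyclic T)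
    (x y : X) (hxy : (x, y) ∈ T) :
    ∃! C : Set X, IsCut G C ∧ outerEdgeB G C = {(x, y)} := by
  classical
  have hne : x ≠ y := fun h => hT.2 x (h ▸ hxy)
  have hGsymm : ∀ p ∈ G, (p.2, p.1) ∈ G := by
    rw [hG]
    rintro p (h | h)
    · exact Or.inl (hT.1 _ h)
    · exact Or.inr (hH.1 _ h)
  set G' : Set (X × X) := {p ∈ G | p ≠ (x, y) ∧ p ≠ (y, x)} with hG'def
  have hG'sub : G' ⊆ G := sep_subset _ _
  have hG'symm : ∀ p ∈ G', (p.2, p.1) ∈ G' := by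
    rintro ⟨a, c⟩ ⟨hpG, h1, h2⟩
    refine ⟨hGsymm _ hpG, ?_, ?_⟩
    · rintro h
      apply h2
      rw [Prod.mk.injEq] at h ⊢
      exact ⟨h.2, h.1⟩
    · rintro h
      apply h1
      rw [Prod.mk.injEq] at h ⊢
      exact ⟨h.2, h.1⟩
  have hkey : ¬ Reach G' x y := key_no_reach hT hH hG hfree hacyc hxy
  set C : Set X := {w | Reach G' x w} with hCdef
  have hxC : x ∈ C := reach_refl _ _
  have hyC : y ∉ C := hkey
  have hedgeG : (x, y) ∈ G := by rw [hG]; exact Or.inl hxy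
  have hclosed : ∀ a b, a ∈ C → (a, b) ∈ G' → b ∈ C :=
    fun a b ha hab => reach_trans ha (reach_edge hab)
  have hB : outerEdgeB G C = {(x, y)} := by
    ext ⟨a, b⟩
    simp only [outerEdgeB, mem_setOf_eq, mem_singleton_iff]
    constructor
    · rintro ⟨hab, haC, hbC⟩
      by_cases h1 : (a, b) = (x, y)
      · exact h1
      by_cases h2 : (a, b) = (y, x)
      · exfalso
        rw [Prod.mk.injEq] at h2
        exact hyC (h2.1 ▸ haC)
      · exact absurd (hclosed a b haC ⟨hab, h1, h2⟩) hbC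
    · rintro h
      rw [Prod.mk.injEq] at h
      obtain ⟨ha, hb⟩ := h
      subst ha; subst hb
      exact ⟨hedgeG, hxC, hyC⟩
  have hcut : IsCut G C := by
    refine ⟨⟨x, hxC, ?_, ?_⟩, by rw [hB]; exact finite_singleton _⟩
    · intro a ha
      exact reach_mono hG'sub ha
    · intro h
      exact hyC (h.symm ▸ (reach_edge hedgeG : y ∈ cls G x))
  refine ⟨C, ⟨hcut, hB⟩, ?_⟩
  rintro D ⟨hcutD, hBD⟩
  have hmemxy : (x, y) ∈ outerEdgeB G D := by rw [hBD]; exact rfl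
  have hxD : x ∈ D := hmemxy.2.1
  have hyD : y ∉ D := hmemxy.2.2
  have hDcl : ∀ a b, a ∈ D → (a, b) ∈ G' → b ∈ D := by
    intro a b ha hab
    by_contra hb
    have hm : (a, b) ∈ outerEdgeB G D := ⟨hG'sub hab, ha, hb⟩
    rw [hBD] at hm
    exact hab.2.1 hm
  have hDccl : ∀ a b, a ∉ D → (a, b) ∈ G' → b ∉ D := by
    intro a b ha hab hb
    have hba : (b, a) ∈ G' := hG'symm _ hab
    have hm : (b, a) ∈ outerEdgeB G D := ⟨hG'sub hba, hb, ha⟩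
    rw [hBD] at hm
    exact hba.2.1 hm
  obtain ⟨⟨x₀, hx0D, hsubD, _⟩, _⟩ := hcutD
  have hdich : ∀ w, Reach G x w → (Reach G' x w ∨ Reach G' y w) := by
    intro w hw
    refine reach_ind (E := G) (fun v => Reach G' x v ∨ Reach G' y v) ?_ hw
      (Or.inl (reach_refl _ _))
    intro a b ha hab
    by_cases h1 : (a, b) = (x, y)
    · rw [Prod.mk.injEq] at h1
      exact Or.inr (h1.2 ▸ reach_refl G' y)
    by_cases h2 : (a, b) = (y, x)
    · rw [Prod.mk.injEq] at h2
      exact Or.inl (h2.2 ▸ reach_refl G' x)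
    · have hab' : (a, b) ∈ G' := ⟨hab, h1, h2⟩
      rcases ha with ha | ha
      · exact Or.inl (reach_trans ha (reach_edge hab'))
      · exact Or.inr (reach_trans ha (reach_edge hab'))
  ext w
  constructor
  · intro hw
    have hrx : Reach G x w := by
      have h1 : Reach G x₀ w := hsubD hw
      have h2 : Reach G x₀ x := hsubD hxD
      exact reach_trans (reach_symm hGsymm h2) h1
    rcases hdich w hrx with h | h
    · exact h
    · exact absurd hw (reach_ind (E := G') (fun v => v ∉ D) hDccl h hyD)
  · intro hw
    exact reach_ind (E := G') (fun v => v ∈ D) hDcl hw hxD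
end
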